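/- arXiv:2111.14797 — 11 statements merged into one kernel-verified Lean document; each statement's English description precedes it below -/
import Mathlib

section
/- Let W be the unique formal power series over ℚ with constant coefficient 1 satisfying W² = 1 − 6z² + 5z⁴, and set P = (1 + z² + W)/2, a formal power series with constant coefficient 1 (hence invertible). A decorated (partial) Dyck path is a word over the alphabet {U, D, R}, where U contributes +1 to the height and D (black down-step) and R (red down-step) each contribute −1, such that every prefix has nonnegative height and the factors UR and RU do not occur. Then for every j ≥ 0, the generating function Σ_{n≥0} (number of decorated partial Dyck paths of length n with final height j) z^n equals z^j (3 − 3z² − W) / (2 P^{j+1}). -/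
noncomputable section

/-- A step of a decorated Dyck path: up, black down, or red down. -/
inductive DecStep : Type
  | up : DecStep
  | down : DecStep
  | red : DecStep

/-- Height change of a step: `U ↦ +1`, `D ↦ -1`, `R ↦ -1`. -/
def DecStep.wt : DecStep → ℤ
  | .up => 1
  | .down => -1
  | .red => -1

/-- Total height change of a word of steps. -/
def decHeight (p : List DecStep) : ℤ := (p.map DecStep.wt).sum

/-- A decorated (partial) Dyck path: every prefix has nonnegative height and the
factors `UR` and `RU` do not occur. -/
def IsDecorated (p : List DecStep) : Prop :=
  (∀ q, q <+: p → 0 ≤ decHeight q) ∧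
  ¬ [DecStep.up, DecStep.red] <:+: p ∧ ¬ [DecStep.red, DecStep.up] <:+: p

/-- The number of decorated partial Dyck paths of length `n` with final height `j`. -/
def decCount (n j : ℕ) : ℕ :=
  Nat.card {p : List DecStep // p.length = n ∧ IsDecorated p ∧ decHeight p = (j : ℤ)}

/-!
Read a path from its last step backwards. For a step `s` and a height `m`, consider the
generating function of the paths ending at height `m` after which `s` may be appended: for
`s = D` all paths (`B_m`), for `s = U` those not ending with `R` (`A_m`), for `s = R` those not
ending with `U` (`C_m`). Removing the last step of a path turns these into a linear system,
e.g. `B_{m+1} = z (A_m + B_{m+2} + C_{m+2})`, which determines every coefficient recursively.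
The explicit series `B_m = z^m (3 - 3z² - W) / (2 P^{m+1})` together with matching `A_m`, `C_m`
solve the same system, because `P² = (1 + z²) P - 2z² + z⁴`.
-/

open PowerSeries

def DecStep.Clash (a b : DecStep) : Prop :=
  [a, b] = [DecStep.up, DecStep.red] ∨ [a, b] = [DecStep.red, DecStep.up]

lemma List.pair_suffix_concat_iff {α : Type*} {a b c : α} {p : List α} :
    [a, b] <:+ p ++ [c] ↔ p.getLast? = some a ∧ b = c := by
  rw [List.suffix_concat_iff]
  constructor
  · rintro (h | ⟨t, ht, hsuf⟩)
    · simp at h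
    · rcases t with _ | ⟨x, _ | ⟨y, t⟩⟩ <;> simp at ht
      obtain ⟨rfl, rfl, rfl⟩ := ht
      exact ⟨List.singleton_suffix_iff_getLast?_eq_some.1 hsuf, rfl⟩
  · rintro ⟨h, rfl⟩
    exact Or.inr ⟨[a], rfl, List.singleton_suffix_iff_getLast?_eq_some.2 h⟩

lemma decHeight_concat (p : List DecStep) (s : DecStep) :
    decHeight (p ++ [s]) = decHeight p + s.wt := by
  simp [decHeight]

lemma isDecorated_concat_iff {p : List DecStep} {s : DecStep} :
    IsDecorated (p ++ [s]) ↔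
      IsDecorated p ∧ 0 ≤ decHeight p + s.wt ∧ ∀ t ∈ p.getLast?, ¬ t.Clash s := by
  simp only [IsDecorated, List.prefix_concat_iff, List.infix_concat_iff,
    List.pair_suffix_concat_iff, DecStep.Clash, forall_eq_or_imp, decHeight_concat]
  cases p.getLast? <;> simp [eq_comm] <;> tauto

def decPaths (n : ℕ) (k : ℤ) : Set (List DecStep) :=
  {p | p.length = n ∧ IsDecorated p ∧ decHeight p = k}

def endingIn (s : DecStep) (n : ℕ) (k : ℤ) : Set (List DecStep) :=
  {p ∈ decPaths n k | p.getLast? = some s}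

def extendable (s : DecStep) (n : ℕ) (k : ℤ) : Set (List DecStep) :=
  {p ∈ decPaths n k | ∀ t ∈ p.getLast?, ¬ t.Clash s}

instance : Finite DecStep :=
  Finite.of_surjective ![DecStep.up, .down, .red] <| by
    rintro (_ | _ | _); exacts [⟨0, rfl⟩, ⟨1, rfl⟩, ⟨2, rfl⟩]

lemma decPaths_finite (n : ℕ) (k : ℤ) : (decPaths n k).Finite :=
  (List.finite_length_eq DecStep n).subset fun _ hp => hp.1

lemma decPaths_eq_empty_of_neg {n : ℕ} {k : ℤ} (hk : k < 0) : decPaths n k = ∅ :=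
  Set.eq_empty_of_forall_notMem fun p ⟨_, hp, hpk⟩ =>
    (hpk ▸ hp.1 p (List.prefix_refl p)).not_gt hk

lemma isDecorated_nil : IsDecorated [] := by
  simp [IsDecorated, decHeight]

lemma ncard_extendable_zero (s : DecStep) (k : ℤ) :
    (extendable s 0 k).ncard = if k = 0 then 1 else 0 := by
  have : extendable s 0 k = if k = 0 then {[]} else ∅ := by
    ext (_ | _) <;> split_ifs with hk <;>
      simp [extendable, decPaths, isDecorated_nil, decHeight, hk, eq_comm]
  split_ifs at this ⊢ <;> simp [this]

lemma extendable_down (n : ℕ) (k : ℤ) : extendable .down n k = decPaths n k := by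
  ext p
  simp [extendable, DecStep.Clash]

lemma concat_mem_decPaths_iff {p : List DecStep} {s : DecStep} {n : ℕ} {k : ℤ} (hk : 0 ≤ k) :
    p ++ [s] ∈ decPaths (n + 1) k ↔
      p ∈ decPaths n (k - s.wt) ∧ ∀ t ∈ p.getLast?, ¬ t.Clash s := by
  simp only [decPaths, Set.mem_ofPred_eq, List.length_append, List.length_singleton,
    isDecorated_concat_iff, decHeight_concat]
  constructor
  · rintro ⟨hlen, ⟨hdec, -, hclash⟩, hp⟩
    exact ⟨⟨by omega, hdec, by omega⟩, hclash⟩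
  · rintro ⟨⟨hlen, hdec, hp⟩, hclash⟩
    exact ⟨by omega, ⟨hdec, by omega, hclash⟩, by omega⟩

lemma endingIn_succ {s : DecStep} {n : ℕ} {k : ℤ} (hk : 0 ≤ k) :
    endingIn s (n + 1) k = (· ++ [s]) '' extendable s n (k - s.wt) := by
  ext p
  rcases List.eq_nil_or_concat' p with rfl | ⟨q, t, rfl⟩
  · simp [endingIn, decPaths]
  · simp only [endingIn, Set.mem_ofPred_eq, List.getLast?_concat, Option.some.injEq,
      Set.mem_image, List.append_singleton_inj]
    constructor
    · rintro ⟨hmem, rfl⟩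
      exact ⟨q, (concat_mem_decPaths_iff hk).1 hmem, rfl, rfl⟩
    · rintro ⟨q, hq, rfl, rfl⟩
      exact ⟨(concat_mem_decPaths_iff hk).2 hq, rfl⟩

lemma ncard_endingIn_succ {s : DecStep} {n : ℕ} {k : ℤ} (hk : 0 ≤ k) :
    (endingIn s (n + 1) k).ncard = (extendable s n (k - s.wt)).ncard := by
  rw [endingIn_succ hk, Set.ncard_image_of_injective _ (List.append_left_injective [s])]

lemma disjoint_endingIn {s t : DecStep} (h : s ≠ t) (n : ℕ) (k : ℤ) :
    Disjoint (endingIn s n k) (endingIn t n k) :=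
  Set.disjoint_left.2 fun _ ⟨_, hs⟩ ⟨_, ht⟩ =>
    h (Option.some_injective _ (hs.symm.trans ht))

lemma extendable_succ_up (n : ℕ) (k : ℤ) :
    extendable .up (n + 1) k = endingIn .up (n + 1) k ∪ endingIn .down (n + 1) k := by
  ext p
  rcases List.eq_nil_or_concat' p with rfl | ⟨q, t, rfl⟩
  · simp [endingIn, extendable, decPaths]
  · cases t <;> simp [endingIn, extendable, DecStep.Clash]

lemma extendable_succ_down (n : ℕ) (k : ℤ) :
    extendable .down (n + 1) k =
      endingIn .up (n + 1) k ∪ endingIn .down (n + 1) k ∪ endingIn .red (n + 1) k := by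
  ext p
  rcases List.eq_nil_or_concat' p with rfl | ⟨q, t, rfl⟩
  · simp [endingIn, extendable, decPaths]
  · cases t <;> simp [endingIn, extendable, DecStep.Clash]

lemma extendable_succ_red (n : ℕ) (k : ℤ) :
    extendable .red (n + 1) k = endingIn .down (n + 1) k ∪ endingIn .red (n + 1) k := by
  ext p
  rcases List.eq_nil_or_concat' p with rfl | ⟨q, t, rfl⟩
  · simp [endingIn, extendable, decPaths]
  · cases t <;> simp [endingIn, extendable, DecStep.Clash]

lemma endingIn_finite (s : DecStep) (n : ℕ) (k : ℤ) : (endingIn s n k).Finite :=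
  (decPaths_finite n k).subset fun _ h => h.1

lemma extendable_neg_one (s : DecStep) (n : ℕ) : extendable s n (-1) = ∅ :=
  Set.subset_eq_empty (fun _ h => h.1) (decPaths_eq_empty_of_neg (by norm_num))

lemma ncard_extendable_succ_up {n : ℕ} {k : ℤ} (hk : 0 ≤ k) :
    (extendable .up (n + 1) k).ncard =
      (extendable .up n (k - 1)).ncard + (extendable .down n (k + 1)).ncard := by
  rw [extendable_succ_up, Set.ncard_union_eq (disjoint_endingIn (by simp) _ _)
    (endingIn_finite _ _ _) (endingIn_finite _ _ _), ncard_endingIn_succ hk, ncard_endingIn_succ hk]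
  simp [DecStep.wt, sub_eq_add_neg]

lemma ncard_extendable_succ_down {n : ℕ} {k : ℤ} (hk : 0 ≤ k) :
    (extendable .down (n + 1) k).ncard = (extendable .up n (k - 1)).ncard +
      (extendable .down n (k + 1)).ncard + (extendable .red n (k + 1)).ncard := by
  rw [extendable_succ_down, Set.ncard_union_eq
    (Set.disjoint_union_left.2
      ⟨disjoint_endingIn (by simp) _ _, disjoint_endingIn (by simp) _ _⟩)
    ((endingIn_finite _ _ _).union (endingIn_finite _ _ _)) (endingIn_finite _ _ _),
    Set.ncard_union_eq (disjoint_endingIn (by simp) _ _) (endingIn_finite _ _ _)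
    (endingIn_finite _ _ _), ncard_endingIn_succ hk, ncard_endingIn_succ hk, ncard_endingIn_succ hk]
  simp [DecStep.wt, sub_eq_add_neg]

lemma ncard_extendable_succ_red {n : ℕ} {k : ℤ} (hk : 0 ≤ k) :
    (extendable .red (n + 1) k).ncard =
      (extendable .down n (k + 1)).ncard + (extendable .red n (k + 1)).ncard := by
  rw [extendable_succ_red, Set.ncard_union_eq (disjoint_endingIn (by simp) _ _)
    (endingIn_finite _ _ _) (endingIn_finite _ _ _), ncard_endingIn_succ hk, ncard_endingIn_succ hk]
  simp [DecStep.wt]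

lemma PowerSeries.mk_eq_one_add_X_mul {R : Type*} [Semiring R] {f : ℕ → R} {G : R⟦X⟧}
    (h0 : f 0 = 1) (h : ∀ n, f (n + 1) = coeff n G) : mk f = 1 + X * G := by
  ext (_ | n) <;> simp [h0, h, coeff_succ_X_mul]

lemma PowerSeries.mk_eq_X_mul {R : Type*} [Semiring R] {f : ℕ → R} {G : R⟦X⟧}
    (h0 : f 0 = 0) (h : ∀ n, f (n + 1) = coeff n G) : mk f = X * G := by
  ext (_ | n) <;> simp [h0, h, coeff_succ_X_mul]

def extendableGF (R : Type*) [Semiring R] (s : DecStep) (m : ℕ) : R⟦X⟧ :=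
  mk fun n => ((extendable s n m).ncard : R)

structure IsDecoratedSystem {R : Type*} [Semiring R] (A B C : ℕ → R⟦X⟧) : Prop where
  a_zero : A 0 = 1 + X * B 1
  a_succ : ∀ k, A (k + 1) = X * (A k + B (k + 2))
  b_zero : B 0 = 1 + X * (B 1 + C 1)
  b_succ : ∀ k, B (k + 1) = X * (A k + B (k + 2) + C (k + 2))
  c_zero : C 0 = 1 + X * (B 1 + C 1)
  c_succ : ∀ k, C (k + 1) = X * (B (k + 2) + C (k + 2))

theorem isDecoratedSystem_extendableGF (R : Type*) [Semiring R] :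
    IsDecoratedSystem (extendableGF R .up) (extendableGF R .down) (extendableGF R .red) where
  a_zero := mk_eq_one_add_X_mul (by simp [ncard_extendable_zero]) fun n => by
    simp [extendableGF, ncard_extendable_succ_up le_rfl, extendable_neg_one]
  a_succ k := mk_eq_X_mul (by simp [ncard_extendable_zero, Nat.cast_add_one_ne_zero]) fun n => by
    simp only [extendableGF, coeff_mk, map_add]
    rw [ncard_extendable_succ_up (by positivity)]
    push_cast; ring_nf
  b_zero := mk_eq_one_add_X_mul (by simp [ncard_extendable_zero]) fun n => by
    simp [extendableGF, ncard_extendable_succ_down le_rfl, extendable_neg_one]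
  b_succ k := mk_eq_X_mul (by simp [ncard_extendable_zero, Nat.cast_add_one_ne_zero]) fun n => by
    simp only [extendableGF, coeff_mk, map_add]
    rw [ncard_extendable_succ_down (by positivity)]
    push_cast; ring_nf
  c_zero := mk_eq_one_add_X_mul (by simp [ncard_extendable_zero]) fun n => by
    simp [extendableGF, ncard_extendable_succ_red le_rfl]
  c_succ k := mk_eq_X_mul (by simp [ncard_extendable_zero, Nat.cast_add_one_ne_zero]) fun n => by
    simp only [extendableGF, coeff_mk, map_add]
    rw [ncard_extendable_succ_red (by positivity)]
    push_cast; ring_nf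

namespace IsDecoratedSystem

variable {R : Type*} [Semiring R] {A B C A' B' C' : ℕ → R⟦X⟧}

theorem coeff_eq (h : IsDecoratedSystem A B C) (h' : IsDecoratedSystem A' B' C') (n k : ℕ) :
    coeff n (A k) = coeff n (A' k) ∧ coeff n (B k) = coeff n (B' k) ∧
      coeff n (C k) = coeff n (C' k) := by
  induction n generalizing k <;> rcases k with _ | k <;> refine ⟨?_, ?_, ?_⟩ <;>
    first
    | rw [h.a_zero, h'.a_zero] | rw [h.a_succ, h'.a_succ]
    | rw [h.b_zero, h'.b_zero] | rw [h.b_succ, h'.b_succ]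
    | rw [h.c_zero, h'.c_zero] | rw [h.c_succ, h'.c_succ]
  all_goals simp [coeff_succ_X_mul, *]

theorem eq (h : IsDecoratedSystem A B C) (h' : IsDecoratedSystem A' B' C') :
    A = A' ∧ B = B' ∧ C = C' :=
  ⟨funext fun k => ext fun n => (h.coeff_eq h' n k).1,
    funext fun k => ext fun n => (h.coeff_eq h' n k).2.1,
    funext fun k => ext fun n => (h.coeff_eq h' n k).2.2⟩

end IsDecoratedSystem

section ClosedForm

variable {K : Type*} [Field K]

def closedB (W P : K⟦X⟧) (m : ℕ) : K⟦X⟧ :=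
  X ^ m * (3 - 3 * X ^ 2 - W) * (2 * P ^ (m + 1))⁻¹

-- the nonempty paths counted by `C_m`
def closedG (W P : K⟦X⟧) (m : ℕ) : K⟦X⟧ :=
  X ^ (m + 2) * (3 - 3 * X ^ 2 - W) * (2 * P ^ (m + 1) * (P - X ^ 2))⁻¹

def closedA (W P : K⟦X⟧) (m : ℕ) : K⟦X⟧ := closedB W P m - X * closedG W P (m + 1)

def closedC (W P : K⟦X⟧) (m : ℕ) : K⟦X⟧ := (if m = 0 then 1 else 0) + closedG W P m

variable [NeZero (2 : K)] (W : K⟦X⟧) {P : K⟦X⟧}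

lemma closedB_mul (hP0 : constantCoeff P ≠ 0) (m : ℕ) :
    closedB W P m * (2 * P ^ (m + 1)) = X ^ m * (3 - 3 * X ^ 2 - W) := by
  rw [closedB, mul_assoc, PowerSeries.inv_mul_cancel _ (by simp [hP0, map_ofNat, two_ne_zero]),
    mul_one]

lemma closedG_mul (hP0 : constantCoeff P ≠ 0) (m : ℕ) :
    closedG W P m * (2 * P ^ (m + 1) * (P - X ^ 2)) = X ^ (m + 2) * (3 - 3 * X ^ 2 - W) := by
  rw [closedG, mul_assoc, PowerSeries.inv_mul_cancel _ (by simp [hP0, map_ofNat, two_ne_zero]),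
    mul_one]

lemma two_mul_pow_mul_sub_X_sq_ne_zero (hP0 : constantCoeff P ≠ 0) (m : ℕ) :
    2 * P ^ (m + 1) * (P - X ^ 2) ≠ 0 :=
  fun h => by simpa [hP0, map_ofNat, two_ne_zero] using congrArg constantCoeff h

lemma closedG_eq (hP0 : constantCoeff P ≠ 0) (m : ℕ) :
    closedG W P m = X * (closedB W P (m + 1) + closedG W P (m + 1)) := by
  apply mul_right_cancel₀ (two_mul_pow_mul_sub_X_sq_ne_zero hP0 (m + 1))
  linear_combination P * closedG_mul W hP0 m - (X * (P - X ^ 2)) * closedB_mul W hP0 (m + 1) -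
    X * closedG_mul W hP0 (m + 1)

variable (hP0 : constantCoeff P ≠ 0) (hquad : P ^ 2 = (1 + X ^ 2) * P - 2 * X ^ 2 + X ^ 4)
include hP0 hquad

lemma closedB_zero (hP : 2 * P = 1 + X ^ 2 + W) :
    closedB W P 0 = 1 + X * (closedB W P 1 + closedG W P 1) := by
  apply mul_right_cancel₀ (two_mul_pow_mul_sub_X_sq_ne_zero hP0 1)
  linear_combination (P * (P - X ^ 2)) * closedB_mul W hP0 0 -
    (X * (P - X ^ 2)) * closedB_mul W hP0 1 - X * closedG_mul W hP0 1 +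
    (P ^ 2 - 2 * X ^ 2 * P) * hP - (4 * P) * hquad

lemma closedB_succ (k : ℕ) :
    closedB W P (k + 1) =
      X * (closedB W P k - X * closedG W P (k + 1) + closedB W P (k + 2) +
        closedG W P (k + 2)) := by
  apply mul_right_cancel₀ (two_mul_pow_mul_sub_X_sq_ne_zero hP0 (k + 2))
  linear_combination (P * (P - X ^ 2)) * closedB_mul W hP0 (k + 1) -
    (X * P ^ 2 * (P - X ^ 2)) * closedB_mul W hP0 k + (X ^ 2 * P) * closedG_mul W hP0 (k + 1) -
    (X * (P - X ^ 2)) * closedB_mul W hP0 (k + 2) - X * closedG_mul W hP0 (k + 2) -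
    (X ^ (k + 1) * (3 - 3 * X ^ 2 - W) * P) * hquad

theorem isDecoratedSystem_closed (hP : 2 * P = 1 + X ^ 2 + W) :
    IsDecoratedSystem (closedA W P) (closedB W P) (closedC W P) where
  a_zero := by
    rw [closedA]
    linear_combination closedB_zero W hP0 hquad hP
  a_succ k := by
    rw [closedA, closedA]
    linear_combination closedB_succ W hP0 hquad k
  b_zero := by simpa [closedC] using closedB_zero W hP0 hquad hP
  b_succ k := by simpa [closedA, closedC] using closedB_succ W hP0 hquad k
  c_zero := by simpa [closedC] using closedG_eq W hP0 0
  c_succ k := by simpa [closedC] using closedG_eq W hP0 (k + 1)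

end ClosedForm

lemma decCount_eq_ncard (n j : ℕ) : decCount n j = (decPaths n j).ncard :=
  Nat.card_coe_set_eq _

/-- with `W` the power series with constant coefficient 1 satisfying
`W² = 1 - 6z² + 5z⁴`, and `P = (1 + z² + W)/2`, the generating function of decorated
partial Dyck paths with final height `j` equals `z^j (3 - 3z² - W)/(2 P^{j+1})`. -/
theorem skew_dyck_partial_gf (W : PowerSeries ℚ)
    (hW0 : PowerSeries.constantCoeff W = 1)
    (hW : W ^ 2 = 1 - 6 * PowerSeries.X ^ 2 + 5 * PowerSeries.X ^ 4)
    (P : PowerSeries ℚ)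
    (hP : 2 * P = 1 + PowerSeries.X ^ 2 + W)
    (j : ℕ) :
    PowerSeries.mk (fun n => (decCount n j : ℚ)) =
      PowerSeries.X ^ j * (3 - 3 * PowerSeries.X ^ 2 - W) * (2 * P ^ (j + 1))⁻¹ := by
  have hP0 : constantCoeff P ≠ 0 := by
    have h := congrArg constantCoeff hP
    simp [hW0, map_ofNat] at h
    simp [show constantCoeff P = 1 by linarith]
  have hquad : P ^ 2 = (1 + X ^ 2) * P - 2 * X ^ 2 + X ^ 4 :=
    mul_left_cancel₀ (a := 4) (fun h => by simpa [map_ofNat] using congrArg constantCoeff h)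
      (by linear_combination hW + (2 * P - 1 - X ^ 2 + W) * hP)
  have hB := ((isDecoratedSystem_extendableGF ℚ).eq (isDecoratedSystem_closed W hP0 hquad hP)).2.1
  calc mk (fun n => (decCount n j : ℚ)) = extendableGF ℚ .down j := by
        simp [extendableGF, extendable_down, decCount_eq_ncard]
    _ = closedB W P j := congrFun hB j
end
end

section
/- Let W be the unique formal power series over ℚ with constant coefficient 1 satisfying W² = 1 − 6z² + 5z⁴. The series 1 + z² − W is divisible by 2z²; set S = (1 + z² − W)/(2z²) ∈ ℚ⟦z⟧ (its constant coefficient is 2). A decorated dual skew path is a word over the alphabet {U, V, D}, where U (black up-step) and V (blue up-step) each contribute +1 to the height and D contributes −1, such that every prefix has nonnegative height and the factors VD and DV do not occur. Then for every j ≥ 0, the generating function Σ_{n≥0} (number of decorated dual skew paths of length n with final height j) z^n equals (3z² − 3 + W) z^j S^{j+1} / (2(z² − 2)), where z² − 2 is invertible in ℚ⟦z⟧. -/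
noncomputable section

/-- A step of a decorated dual skew path: black up, blue up, or down. -/
inductive DualStep : Type
  | up : DualStep
  | blue : DualStep
  | down : DualStep

/-- Height change of a step: `U ↦ +1`, `V ↦ +1`, `D ↦ -1`. -/
def DualStep.wt : DualStep → ℤ
  | .up => 1
  | .blue => 1
  | .down => -1

/-- Total height change of a word of steps. -/
def dualHeight (p : List DualStep) : ℤ := (p.map DualStep.wt).sum

/-- A decorated dual skew path: every prefix has nonnegative height and the factors
`VD` and `DV` do not occur. -/
def IsDualSkew (p : List DualStep) : Prop :=
  (∀ q, q <+: p → 0 ≤ dualHeight q) ∧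
  ¬ [DualStep.blue, DualStep.down] <:+: p ∧ ¬ [DualStep.down, DualStep.blue] <:+: p

/-- The number of decorated dual skew paths of length `n` with final height `j`. -/
def dualCount (n j : ℕ) : ℕ :=
  Nat.card {p : List DualStep // p.length = n ∧ IsDualSkew p ∧ dualHeight p = (j : ℤ)}

/-! Classify the paths by their last step, the empty path counting as ending in `U`. Deleting
the last step turns the counts into a linear recursion in the length, driven by which steps may
follow which. Explicit series in `X` and `S` satisfy the same recursion precisely because `S` is
the power series root of `X²S² − (1 + X²)S + 2 − X² = 0`, which is what the relation between `W`
and `S` amounts to. So they are the generating functions, and summing over the last step gives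
`(S − 1) X^j S^j`, which is the claimed expression. -/

deriving instance DecidableEq for DualStep

instance : Fintype DualStep :=
  ⟨{.up, .blue, .down}, fun s => by cases s <;> simp⟩

namespace DualStep

theorem univ_eq : (Finset.univ : Finset DualStep) = {up, blue, down} := rfl

theorem sum_univ {M : Type*} [AddCommMonoid M] (f : DualStep → M) :
    ∑ s, f s = f up + f blue + f down := by
  simp [univ_eq, add_assoc]

def CanPrecede : DualStep → DualStep → Prop
  | blue, down => False
  | down, blue => False
  | _, _ => True

instance : DecidableRel CanPrecede := fun a b => by
  cases a <;> cases b <;> unfold CanPrecede <;> infer_instance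

end DualStep

theorem List.pair_infix_concat_iff {α : Type*} {q : List α} {a b s : α} :
    [a, b] <:+: q ++ [s] ↔ [a, b] <:+: q ∨ (q.getLast? = some a ∧ b = s) := by
  rw [List.infix_concat_iff, or_comm]
  refine or_congr_right ⟨fun ⟨t, ht⟩ => ?_, ?_⟩
  · obtain ⟨rfl, hb⟩ := List.append_inj' (by simpa using ht : (t ++ [a]) ++ [b] = q ++ [s]) rfl
    simpa using hb
  · rintro ⟨hq, rfl⟩
    obtain ⟨q', rfl⟩ := List.getLast?_eq_some_iff.mp hq
    exact ⟨q', by simp⟩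

open Finset

theorem Finset.card_filter_comp_eq_sum {α β : Type*} [Fintype β] [DecidableEq β]
    (A : Finset α) (f : α → β) (R : β → Prop) [DecidablePred R] :
    #{a ∈ A | R (f a)} = ∑ b with R b, #{a ∈ A | f a = b} := by
  rw [card_eq_sum_card_fiberwise (t := {b | R b}) fun a ha => by simpa using (mem_filter.mp ha).2]
  refine sum_congr rfl fun b hb => congrArg card ?_
  ext a
  simp only [mem_filter] at hb ⊢
  constructor
  · exact fun ⟨⟨ha, _⟩, hab⟩ => ⟨ha, hab⟩
  · rintro ⟨ha, rfl⟩
    exact ⟨⟨ha, hb.2⟩, rfl⟩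

open DualStep PowerSeries

open scoped PowerSeries

namespace DualSkew

/-- The empty word counts as ending in `U`: like `U`, it may be followed by any step. -/
def lastStep (p : List DualStep) : DualStep := p.getLast?.getD .up

@[simp]
theorem lastStep_concat (q : List DualStep) (s : DualStep) : lastStep (q ++ [s]) = s := by
  simp [lastStep]

@[simp]
theorem dualHeight_concat (q : List DualStep) (s : DualStep) :
    dualHeight (q ++ [s]) = dualHeight q + s.wt := by
  simp [dualHeight]

theorem canPrecede_lastStep_iff (q : List DualStep) (s : DualStep) :
    CanPrecede (lastStep q) s ↔
      ¬ (q.getLast? = some blue ∧ s = down) ∧ ¬ (q.getLast? = some down ∧ s = blue) := by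
  rcases q.getLast?.eq_none_or_eq_some with h | ⟨t, h⟩ <;>
    simp only [lastStep, h] <;> [skip; cases t] <;> cases s <;> simp [CanPrecede]

theorem isDualSkew_nil : IsDualSkew [] := by
  simp [IsDualSkew, dualHeight]

theorem isDualSkew_concat {q : List DualStep} {s : DualStep} :
    IsDualSkew (q ++ [s]) ↔
      IsDualSkew q ∧ 0 ≤ dualHeight q + s.wt ∧ CanPrecede (lastStep q) s := by
  simp only [IsDualSkew, List.prefix_concat_iff, List.pair_infix_concat_iff, or_imp,
    forall_and, forall_eq, dualHeight_concat, not_or, canPrecede_lastStep_iff, @eq_comm _ _ s]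
  tauto

def words (n : ℕ) : Finset (List DualStep) := (List.finite_length_eq DualStep n).toFinset

@[simp]
theorem mem_words {n : ℕ} {p : List DualStep} : p ∈ words n ↔ p.length = n := by
  simp [words]

open scoped Classical in
def paths (n : ℕ) (h : ℤ) : Finset (List DualStep) :=
  {p ∈ words n | IsDualSkew p ∧ dualHeight p = h}

@[simp]
theorem mem_paths {n : ℕ} {h : ℤ} {p : List DualStep} :
    p ∈ paths n h ↔ p.length = n ∧ IsDualSkew p ∧ dualHeight p = h := by
  simp [paths]

def pathCount (n : ℕ) (h : ℤ) (s : DualStep) : ℕ := #{p ∈ paths n h | lastStep p = s}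

theorem dualCount_eq_sum_pathCount (n j : ℕ) : dualCount n j = ∑ s, pathCount n j s := by
  rw [dualCount, Nat.subtype_card (paths n j) fun p => mem_paths]
  exact card_eq_sum_card_fiberwise fun _ _ => mem_univ _

theorem pathCount_zero (h : ℤ) (s : DualStep) :
    pathCount 0 h s = if h = 0 ∧ s = up then 1 else 0 := by
  have : {p ∈ paths 0 h | lastStep p = s} = if h = 0 ∧ s = up then {[]} else ∅ := by
    ext p
    simp only [mem_filter, mem_paths, List.length_eq_zero_iff]
    split_ifs with hhs
    · obtain ⟨rfl, rfl⟩ := hhs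
      simp only [mem_singleton]
      exact ⟨fun hp => hp.1.1, by rintro rfl; exact ⟨⟨rfl, isDualSkew_nil, rfl⟩, rfl⟩⟩
    · simp only [notMem_empty, iff_false]
      rintro ⟨⟨rfl, -, hh⟩, hs⟩
      exact hhs ⟨hh.symm, hs.symm⟩
  rw [pathCount, this]
  split_ifs <;> rfl

theorem pathCount_of_neg {n : ℕ} {h : ℤ} (hh : h < 0) (s : DualStep) : pathCount n h s = 0 := by
  refine card_eq_zero.mpr (filter_eq_empty_iff.mpr fun p hp => absurd hh ?_)
  obtain ⟨-, hp, hph⟩ := mem_paths.mp hp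
  exact hph ▸ not_lt.mpr (hp.1 p List.prefix_rfl)

theorem filter_lastStep_paths_succ {n : ℕ} {h : ℤ} (hh : 0 ≤ h) (s : DualStep) :
    {p ∈ paths (n + 1) h | lastStep p = s} =
      {q ∈ paths n (h - s.wt) | CanPrecede (lastStep q) s}.image (· ++ [s]) := by
  ext p
  simp only [mem_filter, mem_paths, mem_image]
  constructor
  · rintro ⟨⟨hl, hp, hph⟩, rfl⟩
    obtain ⟨q, t, rfl⟩ := (List.eq_nil_or_concat' p).resolve_left (by rintro rfl; simp at hl)
    rw [isDualSkew_concat] at hp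
    simp only [List.length_append, List.length_singleton, add_left_inj, dualHeight_concat,
      lastStep_concat] at hl hph ⊢
    exact ⟨q, ⟨⟨hl, hp.1, by omega⟩, hp.2.2⟩, rfl⟩
  · rintro ⟨q, ⟨⟨rfl, hq, hqh⟩, hc⟩, rfl⟩
    simp [isDualSkew_concat, hq, hc, hqh, hh]

theorem pathCount_succ {n : ℕ} {h : ℤ} (hh : 0 ≤ h) (s : DualStep) :
    pathCount (n + 1) h s = ∑ t with CanPrecede t s, pathCount n (h - s.wt) t := by
  rw [pathCount, filter_lastStep_paths_succ hh,
    card_image_of_injective _ (List.append_left_injective _),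
    card_filter_comp_eq_sum _ lastStep (CanPrecede · s)]
  rfl

/-- The generating function, in closed form, of the paths of final height `j` whose last step
is `s`. -/
def pathSeries (S : ℚ⟦X⟧) : DualStep → ℕ → ℚ⟦X⟧
  | up, 0 => 1
  | up, j + 1 => (S - 1) * X ^ (j + 1) * S ^ j
  | blue, 0 => 0
  | blue, j + 1 => X ^ (j + 1) * S ^ j
  | down, j => (S - 2) * X ^ j * S ^ j

theorem sum_pathSeries (S : ℚ⟦X⟧) (j : ℕ) :
    ∑ s, pathSeries S s j = (S - 1) * X ^ j * S ^ j := by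
  cases j <;> simp only [DualStep.sum_univ, pathSeries] <;> ring

theorem pathSeries_succ (S : ℚ⟦X⟧) {s : DualStep} (hs : s ≠ down) (j : ℕ) :
    pathSeries S s (j + 1) = X * ∑ t with CanPrecede t s, pathSeries S t j := by
  rw [sum_filter, DualStep.sum_univ]
  cases s <;> cases j <;> simp [pathSeries, CanPrecede] at hs ⊢ <;> ring

section Quadratic

variable {S : ℚ⟦X⟧} (hS : X ^ 2 * S ^ 2 - (1 + X ^ 2) * S + (2 - X ^ 2) = 0)
include hS

theorem constantCoeff_eq_two : constantCoeff S = 2 := by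
  have h0 := congrArg constantCoeff hS
  simp only [map_add, map_sub, map_mul, map_pow, constantCoeff_X, constantCoeff_one, map_ofNat,
    map_zero] at h0
  linear_combination -h0

theorem pathSeries_down (j : ℕ) :
    pathSeries S down j = X * ∑ t with CanPrecede t down, pathSeries S t (j + 1) := by
  rw [sum_filter, DualStep.sum_univ]
  simp only [pathSeries, CanPrecede, ↓reduceIte, add_zero]
  linear_combination (-X ^ j * S ^ j) * hS

theorem coeff_zero_pathSeries (s : DualStep) (j : ℕ) :
    coeff 0 (pathSeries S s j) = if j = 0 ∧ s = up then 1 else 0 := by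
  cases s <;> cases j <;> simp [pathSeries, constantCoeff_eq_two hS, map_ofNat]

theorem coeff_pathSeries (n : ℕ) (s : DualStep) (j : ℕ) :
    coeff n (pathSeries S s j) = pathCount n j s := by
  induction n generalizing s j with
  | zero =>
    rw [coeff_zero_pathSeries hS, pathCount_zero]
    simp
  | succ n ih =>
    have coeff_succ {s : DualStep} {i : ℕ} (hi : (i : ℤ) = j - s.wt)
        (hF : pathSeries S s j = X * ∑ t with CanPrecede t s, pathSeries S t i) :
        coeff (n + 1) (pathSeries S s j) = pathCount (n + 1) j s := by
      rw [hF, coeff_succ_X_mul, map_sum, pathCount_succ (Int.natCast_nonneg j), ← hi]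
      push_cast
      exact sum_congr rfl fun t _ => ih t i
    have count_at_zero (s : DualStep) (hs : s.wt = 1) : pathCount (n + 1) 0 s = 0 := by
      rw [pathCount_succ le_rfl]
      exact sum_eq_zero fun t _ => pathCount_of_neg (by omega) t
    cases s
    case down => exact coeff_succ (by simp [wt]) (pathSeries_down hS j)
    all_goals
      cases j with
      | zero =>
        rw [Nat.cast_zero, count_at_zero _ rfl]
        simp [pathSeries, coeff_one]
      | succ i => exact coeff_succ (by simp [wt]) (pathSeries_succ S (by simp) i)

theorem mk_dualCount_eq (j : ℕ) :
    mk (fun n => (dualCount n j : ℚ)) = (S - 1) * X ^ j * S ^ j := by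
  ext n
  rw [coeff_mk, dualCount_eq_sum_pathCount, ← sum_pathSeries, map_sum]
  push_cast
  exact sum_congr rfl fun s _ => (coeff_pathSeries hS n s j).symm

end Quadratic

end DualSkew

theorem dual_skew_dyck_partial_gf_general (W : PowerSeries ℚ)
    (hW : W ^ 2 = 1 - 6 * PowerSeries.X ^ 2 + 5 * PowerSeries.X ^ 4)
    (S : PowerSeries ℚ)
    (hS : 2 * PowerSeries.X ^ 2 * S = 1 + PowerSeries.X ^ 2 - W)
    (j : ℕ) :
    IsUnit (PowerSeries.X ^ 2 - 2 : PowerSeries ℚ) ∧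
    PowerSeries.mk (fun n => (dualCount n j : ℚ)) =
      (3 * PowerSeries.X ^ 2 - 3 + W) * PowerSeries.X ^ j * S ^ (j + 1) *
        (2 * (PowerSeries.X ^ 2 - 2))⁻¹ := by
  have hQ : X ^ 2 * S ^ 2 - (1 + X ^ 2) * S + (2 - X ^ 2) = 0 := by
    have h4 : (4 : ℚ⟦X⟧) ≠ 0 := fun h => by simpa [map_ofNat] using congrArg constantCoeff h
    refine mul_left_cancel₀ (mul_ne_zero h4 (pow_ne_zero 2 X_ne_zero)) ?_
    linear_combination hW - (W + 1 + X ^ 2 - 2 * X ^ 2 * S) * hS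
  have hX2 : constantCoeff (X ^ 2 - 2 : ℚ⟦X⟧) ≠ 0 := by simp [map_ofNat]
  refine ⟨isUnit_iff_constantCoeff.mpr hX2.isUnit, ?_⟩
  rw [DualSkew.mk_dualCount_eq hQ, eq_mul_inv_iff_mul_eq (by simp [map_ofNat])]
  linear_combination (2 * X ^ j * S ^ j) * hQ - X ^ j * S ^ (j + 1) * hS

/-- with `W` the power series with constant coefficient 1 satisfying
`W² = 1 - 6z² + 5z⁴`, and `S = (1 + z² - W)/(2z²)` (constant coefficient 2), the
generating function of decorated dual skew paths with final height `j` equals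
`(3z² - 3 + W) z^j S^{j+1} / (2(z² - 2))`, where `z² - 2` is invertible in `ℚ⟦z⟧`. -/
theorem dual_skew_dyck_partial_gf (W : PowerSeries ℚ)
    (hW0 : PowerSeries.constantCoeff W = 1)
    (hW : W ^ 2 = 1 - 6 * PowerSeries.X ^ 2 + 5 * PowerSeries.X ^ 4)
    (S : PowerSeries ℚ)
    (hS : 2 * PowerSeries.X ^ 2 * S = 1 + PowerSeries.X ^ 2 - W)
    (hS0 : PowerSeries.constantCoeff S = 2)
    (j : ℕ) :
    IsUnit (PowerSeries.X ^ 2 - 2 : PowerSeries ℚ) ∧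
    PowerSeries.mk (fun n => (dualCount n j : ℚ)) =
      (3 * PowerSeries.X ^ 2 - 3 + W) * PowerSeries.X ^ j * S ^ (j + 1) *
        (2 * (PowerSeries.X ^ 2 - 2))⁻¹ :=
  dual_skew_dyck_partial_gf_general W hW S hS j
end
end

section
/- Fix an integer k ≥ 1. A partial k-Dyck path is a word over {U, D} where U contributes +k to the height and D contributes −1, such that every prefix has nonnegative height. Let F ∈ ℚ⟦z, u⟧ be the bivariate formal power series in which the coefficient of z^n u^j is the number of nonempty partial k-Dyck paths whose last letter is U, having exactly n letters U and final height j (this number is finite for each n, j). Let ū ∈ ℚ⟦z⟧ be the unique formal power series with constant coefficient 1 satisfying 1 − ū + z ū^{k+1} = 0. Then F · (1 − u + z u^{k+1}) = z u^k (ū − u) in ℚ⟦z, u⟧. -/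
noncomputable section

/-- A step of a `k`-Dyck path: up (height change `+k`) or down (height change `-1`). -/
inductive KStep : Type
  | up : KStep
  | down : KStep
  deriving DecidableEq

/-- Height change of a step of a `k`-Dyck path. -/
def KStep.wt (k : ℕ) : KStep → ℤ
  | .up => (k : ℤ)
  | .down => -1

/-- Total height change of a word of steps. -/
def kHeight (k : ℕ) (p : List KStep) : ℤ := (p.map (KStep.wt k)).sum

/-- The number of nonempty partial `k`-Dyck paths whose last letter is an up-step,
with exactly `n` up-steps and final height `j` (every prefix has nonnegative height). -/
def kDyckCount (k n j : ℕ) : ℕ :=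
  Nat.card {p : List KStep // p ≠ [] ∧ p.getLast? = some KStep.up ∧
    p.count KStep.up = n ∧ (∀ q, q <+: p → 0 ≤ kHeight k q) ∧ kHeight k p = (j : ℤ)}

/-!
Read `ℚ⟦z⟧⟦u⟧` as `R⟦X⟧⟦X⟧` with `u` the outer variable. Let `G` count all partial
`k`-Dyck paths, with any last letter. Removing the last letter gives
`u G = u + (G - G(z,0)) + u F` and `F = z u^k G`, so `G K = G(z,0) - u` for the kernel
`K = 1 - u + z u^{k+1}`. Because `ū` is a root of `K`, we have `K = (ū - u) T` with `T` a
polynomial in `u`. Then `(G T - 1)(ū - u) = G(z,0) - ū` does not depend on `u`. The coefficient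
of `z^n` in `G T - 1` has `u`-degree at most `k n`, and this forces `G(z,0) = ū`. Hence
`F K = z u^k G K = z u^k (ū - u)`.
-/

open PowerSeries

section LastLetter

variable {α : Type*}

theorem ncard_inter_getLast?_eq_some (A : Set (List α)) (a : α) :
    (A ∩ {p | p.getLast? = some a}).ncard = ((· ++ [a]) ⁻¹' A).ncard := by
  rw [← Set.ncard_preimage_of_injective_subset_range (List.append_left_injective [a])]
  · congr 1
    ext q
    simp
  · rintro p ⟨-, hp⟩
    obtain ⟨q, rfl⟩ := List.getLast?_eq_some_iff.mp hp
    exact ⟨q, rfl⟩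

theorem ncard_eq_sum_ncard_preimage_append_singleton [Fintype α] {A : Set (List α)}
    (hA : A.Finite) :
    A.ncard = (A ∩ {[]}).ncard + ∑ a, ((· ++ [a]) ⁻¹' A).ncard := by
  classical
  have hfiber : A.ncard = ∑ o : Option α, (A ∩ {p | p.getLast? = o}).ncard := by
    rw [Set.ncard_eq_toFinset_card A hA,
      Finset.card_eq_sum_card_fiberwise (f := List.getLast?) (t := Finset.univ) (by simp)]
    refine Finset.sum_congr rfl fun o _ => ?_
    rw [← Set.ncard_coe_finset]
    congr 1
    ext p
    simp
  rw [hfiber, Fintype.sum_option]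
  simp only [List.getLast?_eq_none_iff, ncard_inter_getLast?_eq_some]
  rfl

end LastLetter

instance : Fintype KStep := ⟨{.up, .down}, fun x => by cases x <;> simp⟩

theorem kHeight_append_singleton (k : ℕ) (p : List KStep) (a : KStep) :
    kHeight k (p ++ [a]) = kHeight k p + a.wt k := by
  simp [kHeight]

theorem kHeight_eq_sub (k : ℕ) (p : List KStep) :
    kHeight k p = k * p.count .up - p.count .down := by
  induction p with
  | nil => simp [kHeight]
  | cons a p ih =>
    simp only [kHeight, List.map_cons, List.sum_cons] at ih ⊢
    cases a <;> simp only [KStep.wt, ih, List.count_cons_self, List.count_cons_of_ne, ne_eq,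
      reduceCtorEq, not_false_eq_true, Nat.cast_add, Nat.cast_one] <;> ring

theorem length_eq_count_up_add_count_down (p : List KStep) :
    p.length = p.count .up + p.count .down := by
  induction p with
  | nil => rfl
  | cons a p ih =>
    cases a <;> simp only [List.length_cons, ih, List.count_cons_self, List.count_cons_of_ne, ne_eq,
      reduceCtorEq, not_false_eq_true] <;> omega

def IsPartialKDyck (k : ℕ) (p : List KStep) : Prop := ∀ q, q <+: p → 0 ≤ kHeight k q

theorem isPartialKDyck_nil (k : ℕ) : IsPartialKDyck k [] := by
  intro q hq
  simp [List.prefix_nil.mp hq, kHeight]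

theorem isPartialKDyck_append_singleton {k : ℕ} {p : List KStep} {a : KStep} :
    IsPartialKDyck k (p ++ [a]) ↔ IsPartialKDyck k p ∧ 0 ≤ kHeight k (p ++ [a]) := by
  simp only [IsPartialKDyck, List.prefix_concat_iff, or_imp, forall_and, forall_eq]
  exact and_comm

def partialKDyckPaths (k n j : ℕ) : Set (List KStep) :=
  {p | IsPartialKDyck k p ∧ p.count .up = n ∧ kHeight k p = j}

section PartialKDyckPaths

variable {k n j : ℕ}

theorem partialKDyckPaths_finite (k n j : ℕ) : (partialKDyckPaths k n j).Finite := by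
  refine (List.finite_length_le KStep (n + k * n)).subset fun p ⟨_, hup, hj⟩ => ?_
  have hdown : p.count .down ≤ k * n := by
    have := kHeight_eq_sub k p
    rw [hup] at this
    zify
    omega
  simp only [Set.mem_ofPred_eq, length_eq_count_up_add_count_down, hup]
  omega

theorem partialKDyckPaths_eq_empty (h : k * n < j) : partialKDyckPaths k n j = ∅ := by
  refine Set.eq_empty_of_forall_notMem fun p ⟨_, hup, hj⟩ => ?_
  have := kHeight_eq_sub k p
  rw [hup, hj] at this
  zify at h
  omega

theorem nil_mem_partialKDyckPaths : [] ∈ partialKDyckPaths k n j ↔ n = 0 ∧ j = 0 := by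
  simp [partialKDyckPaths, isPartialKDyck_nil, kHeight, eq_comm]

theorem preimage_append_down_partialKDyckPaths :
    (· ++ [.down]) ⁻¹' partialKDyckPaths k n j = partialKDyckPaths k n (j + 1) := by
  ext p
  simp only [partialKDyckPaths, Set.mem_preimage, Set.mem_ofPred_eq,
    isPartialKDyck_append_singleton, kHeight_append_singleton, KStep.wt, List.count_append]
  exact ⟨fun ⟨⟨hp, _⟩, hn, hj⟩ => ⟨hp, hn, by omega⟩,
    fun ⟨hp, hn, hj⟩ => ⟨⟨hp, by omega⟩, hn, by omega⟩⟩

theorem preimage_append_up_partialKDyckPaths_succ :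
    (· ++ [.up]) ⁻¹' partialKDyckPaths k (n + 1) (j + k) = partialKDyckPaths k n j := by
  ext p
  simp only [partialKDyckPaths, Set.mem_preimage, Set.mem_ofPred_eq,
    isPartialKDyck_append_singleton, kHeight_append_singleton, KStep.wt, List.count_append,
    List.count_singleton_self]
  exact ⟨fun ⟨⟨hp, _⟩, hn, hj⟩ => ⟨hp, by omega, by omega⟩,
    fun ⟨hp, hn, hj⟩ => ⟨⟨hp, by omega⟩, by omega, by omega⟩⟩

theorem preimage_append_up_partialKDyckPaths_eq_empty (h : n = 0 ∨ j < k) :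
    (· ++ [.up]) ⁻¹' partialKDyckPaths k n j = ∅ := by
  refine Set.eq_empty_of_forall_notMem fun p ⟨hp, hn, hj⟩ => ?_
  rw [List.count_append, List.count_singleton_self] at hn
  rw [kHeight_append_singleton, KStep.wt] at hj
  have := hp p (List.prefix_append p _)
  omega

end PartialKDyckPaths

def partialKDyckCount (k n j : ℕ) : ℕ := (partialKDyckPaths k n j).ncard

section Counts

variable {k n j : ℕ}

theorem kDyckCount_eq_ncard_preimage (k n j : ℕ) :
    kDyckCount k n j = ((· ++ [KStep.up]) ⁻¹' partialKDyckPaths k n j).ncard := by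
  rw [← ncard_inter_getLast?_eq_some, kDyckCount, ← Nat.card_coe_set_eq]
  refine Nat.card_congr (Equiv.subtypeEquivRight fun p => ?_)
  simp only [partialKDyckPaths, IsPartialKDyck, Set.mem_inter_iff, Set.mem_ofPred_eq]
  constructor
  · rintro ⟨-, hlast, hup, hp, hj⟩
    exact ⟨⟨hp, hup, hj⟩, hlast⟩
  · rintro ⟨⟨hp, hup, hj⟩, hlast⟩
    exact ⟨by rintro rfl; simp at hlast, hlast, hup, hp, hj⟩

theorem partialKDyckCount_eq_add (k n j : ℕ) :
    partialKDyckCount k n j =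
      (if n = 0 ∧ j = 0 then 1 else 0) + partialKDyckCount k n (j + 1) + kDyckCount k n j := by
  have hsum : ∀ f : KStep → ℕ, ∑ a, f a = f .up + f .down := fun f => rfl
  rw [partialKDyckCount,
    ncard_eq_sum_ncard_preimage_append_singleton (partialKDyckPaths_finite k n j), hsum,
    preimage_append_down_partialKDyckPaths, kDyckCount_eq_ncard_preimage, partialKDyckCount]
  split_ifs with h
  · rw [Set.inter_eq_right.mpr (Set.singleton_subset_iff.mpr (nil_mem_partialKDyckPaths.mpr h))]
    simp only [Set.ncard_singleton]
    ring
  · rw [Set.inter_singleton_eq_empty.mpr (mt nil_mem_partialKDyckPaths.mp h)]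
    simp only [Set.ncard_empty]
    ring

theorem kDyckCount_succ_add (k n j : ℕ) :
    kDyckCount k (n + 1) (j + k) = partialKDyckCount k n j := by
  rw [kDyckCount_eq_ncard_preimage, preimage_append_up_partialKDyckPaths_succ, partialKDyckCount]

theorem kDyckCount_eq_zero (h : n = 0 ∨ j < k) : kDyckCount k n j = 0 := by
  rw [kDyckCount_eq_ncard_preimage, preimage_append_up_partialKDyckPaths_eq_empty h,
    Set.ncard_empty]

theorem partialKDyckCount_eq_zero (h : k * n < j) : partialKDyckCount k n j = 0 := by
  rw [partialKDyckCount, partialKDyckPaths_eq_empty h, Set.ncard_empty]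

end Counts

section GeneratingFunctions

variable (R : Type*) [CommRing R]

def kDyckKernel (k : ℕ) : R⟦X⟧⟦X⟧ := 1 - X + C X * X ^ (k + 1)

def partialKDyckGF (k : ℕ) : R⟦X⟧⟦X⟧ := mk fun j => mk fun n => (partialKDyckCount k n j : R)

theorem mk_kDyckCount_eq (k : ℕ) :
    (mk fun j => mk fun n => (kDyckCount k n j : R)) = C X * X ^ k * partialKDyckGF R k := by
  ext j n
  rw [coeff_mk, coeff_mk, mul_assoc, coeff_C_mul, coeff_X_pow_mul']
  split_ifs with hj
  · obtain ⟨i, rfl⟩ : ∃ i, j = i + k := ⟨j - k, by omega⟩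
    rw [Nat.add_sub_cancel]
    cases n with
    | zero => simp [kDyckCount_eq_zero (Or.inl rfl)]
    | succ n => rw [coeff_succ_X_mul, kDyckCount_succ_add, partialKDyckGF, coeff_mk, coeff_mk]
  · simp [kDyckCount_eq_zero (Or.inr (not_le.mp hj))]

theorem X_mul_partialKDyckGF (k : ℕ) :
    X * partialKDyckGF R k = X + (partialKDyckGF R k - C (coeff 0 (partialKDyckGF R k)))
      + X * mk fun j => mk fun n => (kDyckCount k n j : R) := by
  ext j n
  cases j with
  | zero => simp
  | succ j =>
    simp only [map_add, map_sub, coeff_succ_X_mul, coeff_X, coeff_C, partialKDyckGF, coeff_mk]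
    rw [partialKDyckCount_eq_add]
    by_cases hj : j = 0 <;> by_cases hn : n = 0 <;> simp [hj, hn]

theorem partialKDyckGF_mul_kDyckKernel (k : ℕ) :
    partialKDyckGF R k * kDyckKernel R k = C (coeff 0 (partialKDyckGF R k)) - X := by
  have h := X_mul_partialKDyckGF R k
  rw [mk_kDyckCount_eq] at h
  rw [kDyckKernel]
  linear_combination -h

end GeneratingFunctions

def slopeBoundedSubring (R : Type*) [Ring R] (k : ℕ) : Subring R⟦X⟧⟦X⟧ where
  carrier := {f | ∀ n j, k * n < j → coeff n (coeff j f) = 0}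
  mul_mem' {f g} hf hg n j hj := by
    rw [coeff_mul, map_sum]
    refine Finset.sum_eq_zero ?_
    rintro ⟨a, b⟩ hab
    rw [coeff_mul]
    refine Finset.sum_eq_zero ?_
    rintro ⟨c, d⟩ hcd
    simp only [Finset.HasAntidiagonal.mem_antidiagonal] at hab hcd
    subst hab hcd
    rcases lt_or_ge (k * c) a with hc | hc
    · rw [hf c a hc, zero_mul]
    · rw [hg d b (by rw [mul_add] at hj; omega), mul_zero]
  one_mem' n j hj := by
    rw [coeff_one, if_neg (by omega), map_zero]
  add_mem' {f g} hf hg n j hj := by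
    rw [map_add, map_add, hf n j hj, hg n j hj, add_zero]
  zero_mem' n j _ := by
    rw [map_zero, map_zero]
  neg_mem' {f} hf n j hj := by
    rw [map_neg, map_neg, hf n j hj, neg_zero]

section SlopeBounded

variable {R : Type*} [Ring R] {k : ℕ}

theorem C_mem_slopeBoundedSubring (c : R⟦X⟧) : C c ∈ slopeBoundedSubring R k := by
  intro n j hj
  rw [coeff_C, if_neg (by omega), map_zero]

theorem C_X_mul_X_pow_mem_slopeBoundedSubring {i : ℕ} (hi : i ≤ k) :
    C X * X ^ i ∈ slopeBoundedSubring R k := by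
  intro n j hj
  rw [coeff_C_mul, coeff_X_pow]
  split_ifs with hji
  · cases n with
    | zero => simp
    | succ n =>
      exact absurd hj (not_lt.mpr (hji ▸ hi.trans (Nat.le_mul_of_pos_right k n.succ_pos)))
  · rw [mul_zero, map_zero]

end SlopeBounded

theorem partialKDyckGF_mem_slopeBoundedSubring (R : Type*) [CommRing R] (k : ℕ) :
    partialKDyckGF R k ∈ slopeBoundedSubring R k := fun n j hj => by
  rw [partialKDyckGF, coeff_mk, coeff_mk, partialKDyckCount_eq_zero hj, Nat.cast_zero]

section KernelMethod

variable {R : Type*} {k : ℕ}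

theorem eq_zero_of_mul_C_sub_X_eq_C [Ring R] {Q : R⟦X⟧⟦X⟧} (hQ : Q ∈ slopeBoundedSubring R k)
    {a c : R⟦X⟧} (h : Q * (C a - X) = C c) : c = 0 := by
  have hstep (j : ℕ) : coeff j Q = coeff (j + 1) Q * a := by
    have := congrArg (coeff (j + 1)) h
    rw [mul_sub, map_sub, coeff_mul_C, coeff_succ_mul_X, coeff_C, if_neg j.succ_ne_zero] at this
    exact (sub_eq_zero.mp this).symm
  have hpow (j : ℕ) : coeff 0 Q = coeff j Q * a ^ j := by
    induction j with
    | zero => rw [pow_zero, mul_one]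
    | succ j ih => rw [ih, hstep j, mul_assoc, ← pow_succ']
  have hQ0 : coeff 0 Q = 0 := by
    ext n
    obtain ⟨q, hq⟩ : X ^ (n + 1) ∣ coeff (k * n + 1) Q :=
      X_pow_dvd_iff.mpr fun m hm => hQ m _ (Nat.lt_succ_of_le (Nat.mul_le_mul_left k (by omega)))
    rw [hpow (k * n + 1), hq, mul_assoc, coeff_X_pow_mul', if_neg (by omega), map_zero]
  have hc := congrArg (coeff 0) h
  rwa [mul_sub, map_sub, coeff_mul_C, coeff_zero_mul_X, sub_zero, coeff_zero_C, hQ0, zero_mul,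
    eq_comm] at hc

variable [CommRing R]

theorem exists_kDyckKernel_eq_mul {ubar : R⟦X⟧} (hker : 1 - ubar + X * ubar ^ (k + 1) = 0) :
    ∃ T ∈ slopeBoundedSubring R k, kDyckKernel R k = (C ubar - X) * T := by
  refine ⟨1 - C X * ∑ i ∈ Finset.range (k + 1), C ubar ^ i * X ^ (k - i),
    sub_mem (one_mem _) ?_, ?_⟩
  · rw [Finset.mul_sum]
    refine sum_mem fun i _ => ?_
    rw [mul_left_comm]
    exact mul_mem (pow_mem (C_mem_slopeBoundedSubring _) i)
      (C_X_mul_X_pow_mem_slopeBoundedSubring (Nat.sub_le k i))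
  have hgeom := geom_sum₂_mul (C ubar) (X : R⟦X⟧⟦X⟧) (k + 1)
  have hCker := congrArg (C (R := R⟦X⟧)) hker
  simp only [Nat.add_sub_cancel, map_add, map_sub, map_one, map_mul, map_pow, map_zero]
    at hgeom hCker
  rw [kDyckKernel]
  linear_combination hCker + C X * hgeom

theorem eq_of_mul_kDyckKernel {ubar : R⟦X⟧} (hker : 1 - ubar + X * ubar ^ (k + 1) = 0)
    {G : R⟦X⟧⟦X⟧} (hG : G ∈ slopeBoundedSubring R k) {g : R⟦X⟧}
    (h : G * kDyckKernel R k = C g - X) : g = ubar := by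
  obtain ⟨T, hT, hK⟩ := exists_kDyckKernel_eq_mul hker
  refine sub_eq_zero.mp
    (eq_zero_of_mul_C_sub_X_eq_C (a := ubar) (sub_mem (mul_mem hG hT) (one_mem _)) ?_)
  rw [hK] at h
  rw [map_sub]
  linear_combination h

end KernelMethod

theorem kdyck_kernel_equation_general (k : ℕ)
    (ubar : PowerSeries ℚ)
    (hker : 1 - ubar + PowerSeries.X * ubar ^ (k + 1) = 0) :
    (PowerSeries.mk fun j => PowerSeries.mk fun n => (kDyckCount k n j : ℚ)) *
        (1 - PowerSeries.X
          + PowerSeries.C (R := PowerSeries ℚ) PowerSeries.X * PowerSeries.X ^ (k + 1)) =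
      PowerSeries.C (R := PowerSeries ℚ) PowerSeries.X * PowerSeries.X ^ k *
        (PowerSeries.C (R := PowerSeries ℚ) ubar - PowerSeries.X) := by
  have hG := partialKDyckGF_mul_kDyckKernel ℚ k
  rw [eq_of_mul_kDyckKernel hker (partialKDyckGF_mem_slopeBoundedSubring ℚ k) hG] at hG
  change _ * kDyckKernel ℚ k = _
  rw [mk_kDyckCount_eq, mul_assoc, hG]

/-- let `F ∈ ℚ⟦z,u⟧` (realized as `ℚ⟦z⟧⟦u⟧`) have as coefficient of
`z^n u^j` the number of nonempty partial `k`-Dyck paths ending with an up-step, with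
`n` up-steps and final height `j`, and let `ū` be the Fuss–Catalan series, the unique
power series with constant coefficient 1 satisfying `1 - ū + z ū^{k+1} = 0`.
Then `F (1 - u + z u^{k+1}) = z u^k (ū - u)`. -/
theorem kdyck_kernel_equation (k : ℕ) (hk : 1 ≤ k)
    (ubar : PowerSeries ℚ)
    (h0 : PowerSeries.constantCoeff (R := ℚ) ubar = 1)
    (hker : 1 - ubar + PowerSeries.X * ubar ^ (k + 1) = 0) :
    (PowerSeries.mk fun j => PowerSeries.mk fun n => (kDyckCount k n j : ℚ)) *
        (1 - PowerSeries.X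
          + PowerSeries.C (R := PowerSeries ℚ) PowerSeries.X * PowerSeries.X ^ (k + 1)) =
      PowerSeries.C (R := PowerSeries ℚ) PowerSeries.X * PowerSeries.X ^ k *
        (PowerSeries.C (R := PowerSeries ℚ) ubar - PowerSeries.X) :=
  kdyck_kernel_equation_general k ubar hker
end
end

section
/- Fix an integer k ≥ 1 and let ū ∈ ℚ⟦z⟧ be the unique formal power series with constant coefficient 1 satisfying 1 − ū + z ū^{k+1} = 0. Then for every integer m ≥ 1, the coefficient of z^m in Σ_{h=1}^{k} ū^h equals (k/(m+1)) · C((k+1)m, m). -/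
/-!
Write `N = (k + 1) m` and `P m j = C(N + j, m + 1) - k C(N + j, m)` (`fussCatalanPrimitive`).
Then `j ↦ P m j` is a primitive of the coefficients of the powers of `ū`:
`[z^m] ū^(j+1) = P m (j+1) - P m j`. Indeed, `ū^(r+1) = ū^r + z ū^(r+k+1)` gives
`[z^(m+1)] ū^r = Σ_{i<r} [z^m] ū^(i+k+1)`, and by Pascal's rule
`P (m+1) (j+1) - P (m+1) j = P m (j+k+1)`; the boundary term `P m k` vanishes because
`(m + 1) C(N + k, m + 1) = k (m + 1) C(N + k, m)`. Hence the sum telescopes to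
`-P m 0 = k C(N, m) - C(N, m + 1) = k/(m+1) C(N, m)`.
-/

open PowerSeries Finset

def fussCatalanPrimitive (k m j : ℕ) : ℤ :=
  ((k + 1) * m + j).choose (m + 1) - k * ((k + 1) * m + j).choose m

theorem fussCatalanPrimitive_self (k m : ℕ) : fussCatalanPrimitive k m k = 0 := by
  have hsub : (k + 1) * m + k - m = k * (m + 1) := Nat.sub_eq_of_eq_add (by ring)
  have h := Nat.choose_succ_right_eq ((k + 1) * m + k) m
  rw [hsub, ← mul_assoc, mul_comm _ k] at h
  have h' : ((k + 1) * m + k).choose (m + 1) = k * ((k + 1) * m + k).choose m :=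
    Nat.eq_of_mul_eq_mul_right m.succ_pos h
  rw [fussCatalanPrimitive, h']
  push_cast
  ring

theorem fussCatalanPrimitive_zero_succ_sub (k j : ℕ) :
    fussCatalanPrimitive k 0 (j + 1) - fussCatalanPrimitive k 0 j = 1 := by
  simp only [fussCatalanPrimitive, mul_zero, zero_add, Nat.choose_one_right, Nat.choose_zero_right]
  push_cast
  ring

theorem fussCatalanPrimitive_succ_sub (k m j : ℕ) :
    fussCatalanPrimitive k (m + 1) (j + 1) - fussCatalanPrimitive k (m + 1) j =
      fussCatalanPrimitive k m (j + k + 1) := by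
  have hn : (k + 1) * (m + 1) + j = (k + 1) * m + (j + k + 1) := by ring
  rw [fussCatalanPrimitive, fussCatalanPrimitive, fussCatalanPrimitive, ← add_assoc, hn,
    Nat.choose_succ_succ' _ (m + 1), Nat.choose_succ_succ' _ m]
  push_cast
  ring

theorem succ_mul_fussCatalanPrimitive_zero (k m : ℕ) :
    (m + 1) * fussCatalanPrimitive k m 0 = -(k * ((k + 1) * m).choose m) := by
  have hsub : (k + 1) * m - m = k * m := Nat.sub_eq_of_eq_add (by ring)
  have h := Nat.choose_succ_right_eq ((k + 1) * m) m
  rw [hsub] at h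
  have h' : (((k + 1) * m).choose (m + 1) : ℤ) * (m + 1) = ((k + 1) * m).choose m * (k * m) := by
    exact_mod_cast h
  rw [fussCatalanPrimitive, add_zero]
  linear_combination h'

section FussCatalanSeries

variable {R : Type*} [CommRing R] {k : ℕ} {u : R⟦X⟧}

theorem coeff_zero_pow_of_eq (hu : u = 1 + X * u ^ (k + 1)) (r : ℕ) : coeff 0 (u ^ r) = 1 := by
  have h0 : constantCoeff u = 1 := by
    rw [hu]
    simp
  rw [coeff_zero_eq_constantCoeff_apply, map_pow, h0, one_pow]

theorem coeff_succ_pow_succ_of_eq (hu : u = 1 + X * u ^ (k + 1)) (m r : ℕ) :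
    coeff (m + 1) (u ^ (r + 1)) = coeff (m + 1) (u ^ r) + coeff m (u ^ (r + k + 1)) := by
  have hpow : u ^ (r + 1) = u ^ r + X * u ^ (r + k + 1) := by
    calc u ^ (r + 1) = u ^ r * (1 + X * u ^ (k + 1)) := by rw [pow_succ, ← hu]
      _ = u ^ r + X * u ^ (r + k + 1) := by ring
  rw [hpow, map_add, coeff_succ_X_mul]

theorem coeff_pow_succ_of_eq (hu : u = 1 + X * u ^ (k + 1)) (m r : ℕ) :
    coeff m (u ^ (r + 1)) =
      ((fussCatalanPrimitive k m (r + 1) - fussCatalanPrimitive k m r : ℤ) : R) := by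
  induction m generalizing r with
  | zero =>
    rw [coeff_zero_pow_of_eq hu, fussCatalanPrimitive_zero_succ_sub, Int.cast_one]
  | succ m ih =>
    have hcoeff : ∀ r, coeff (m + 1) (u ^ r) = fussCatalanPrimitive k m (r + k) := by
      intro r
      induction r with
      | zero => simp [coeff_one, fussCatalanPrimitive_self]
      | succ r ihr =>
        rw [coeff_succ_pow_succ_of_eq hu, ihr, ih, Nat.add_right_comm r 1 k]
        push_cast
        ring
    rw [hcoeff, fussCatalanPrimitive_succ_sub, Nat.add_right_comm r 1 k]

theorem coeff_sum_Icc_pow_of_eq (hu : u = 1 + X * u ^ (k + 1)) (m j : ℕ) :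
    coeff m (∑ h ∈ Icc 1 j, u ^ h) =
      ((fussCatalanPrimitive k m j - fussCatalanPrimitive k m 0 : ℤ) : R) := by
  induction j with
  | zero => simp
  | succ j ih =>
    rw [sum_Icc_succ_top (by omega), map_add, ih, coeff_pow_succ_of_eq hu]
    push_cast
    ring

end FussCatalanSeries

theorem hoppy_first_run_total_general (k : ℕ)
    (ubar : PowerSeries ℚ)
    (hker : 1 - ubar + PowerSeries.X * ubar ^ (k + 1) = 0)
    (m : ℕ) :
    PowerSeries.coeff m (∑ h ∈ Finset.Icc 1 k, ubar ^ h) =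
      (k / (m + 1) : ℚ) * (Nat.choose ((k + 1) * m) m : ℚ) := by
  have hu : ubar = 1 + X * ubar ^ (k + 1) := by linear_combination -hker
  have hboundary :
      ((m + 1) * fussCatalanPrimitive k m 0 : ℚ) = -(k * ((k + 1) * m).choose m) := by
    exact_mod_cast succ_mul_fussCatalanPrimitive_zero k m
  rw [coeff_sum_Icc_pow_of_eq hu, fussCatalanPrimitive_self]
  field_simp
  push_cast
  linear_combination -hboundary

/-- for the Fuss–Catalan series `ū` (unique power-series solution with
constant coefficient 1 of `1 - ū + z ū^{k+1} = 0`), the coefficient of `z^m` in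
`Σ_{h=1}^{k} ū^h` equals `(k/(m+1)) C((k+1)m, m)` for every `m ≥ 1`. -/
theorem hoppy_first_run_total (k : ℕ) (hk : 1 ≤ k)
    (ubar : PowerSeries ℚ)
    (h0 : PowerSeries.constantCoeff ubar = 1)
    (hker : 1 - ubar + PowerSeries.X * ubar ^ (k + 1) = 0)
    (m : ℕ) (hm : 1 ≤ m) :
    PowerSeries.coeff m (∑ h ∈ Finset.Icc 1 k, ubar ^ h) =
      (k / (m + 1) : ℚ) * (Nat.choose ((k + 1) * m) m : ℚ) :=
  hoppy_first_run_total_general k ubar hker m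
end

section
/- Let a be a rational number. In the field of rational functions ℚ(u), set z = u/(1 + (a+2)u + u²) and for each integer p ≥ 0 define R_p = ((1 − u²)/u) · u^{2^p} / (1 − u^{2^{p+1}}). Then R_0 = 1, and for every p ≥ 1 one has R_p = z R_{p−1}² + 2z R_p · (Σ_{0 ≤ j < p} R_j) + a z R_p. -/
/-!
The terms of `R_p` telescope: `y / (1 - y²) = 1 / (1 - y) - 1 / (1 - y²)` with `y = u^{2^j}`
gives `Σ_{j<p} R_j = ((1 - u²)/u) (1/(1 - u) - 1/(1 - u^{2^p}))`. With this closed form, the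
recursion at `p = q + 1` becomes an identity between rational functions of `u`, `a` and
`y = u^{2^q}`, valid in any field as soon as `u ≠ 0`, no `u^{2^k}` equals `1` and the
denominator of `z` is nonzero. In `ℚ(u)` these hold because `u` is transcendental.
-/

noncomputable section

section StrahlerGF

variable {K : Type*} [Field K]

def strahlerGF (u : K) (p : ℕ) : K :=
  (1 - u ^ 2) / u * (u ^ 2 ^ p / (1 - u ^ 2 ^ (p + 1)))

theorem div_one_sub_sq_eq_sub {y : K} (hy : y ^ 2 ≠ 1) :
    y / (1 - y ^ 2) = 1 / (1 - y) - 1 / (1 - y ^ 2) := by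
  have hy1 : 1 - y ≠ 0 := sub_ne_zero.mpr fun h => hy (by rw [← h, one_pow])
  have hy2 : 1 - y ^ 2 ≠ 0 := sub_ne_zero.mpr (Ne.symm hy)
  field_simp
  ring

variable {u : K} (hu : ∀ k, u ^ 2 ^ k ≠ 1)
include hu

theorem strahlerGF_zero (hu0 : u ≠ 0) : strahlerGF u 0 = 1 := by
  have : 1 - u ^ 2 ≠ 0 := sub_ne_zero.mpr (hu 1).symm
  simp only [strahlerGF, zero_add, pow_zero, pow_one]
  field_simp

theorem sum_range_strahlerGF (p : ℕ) :
    ∑ j ∈ Finset.range p, strahlerGF u j =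
      (1 - u ^ 2) / u * (1 / (1 - u) - 1 / (1 - u ^ 2 ^ p)) := by
  have htelescope : ∀ j, u ^ 2 ^ j / (1 - u ^ 2 ^ (j + 1)) =
      1 / (1 - u ^ 2 ^ j) - 1 / (1 - u ^ 2 ^ (j + 1)) := fun j => by
    rw [pow_succ, pow_mul]
    exact div_one_sub_sq_eq_sub (by rw [← pow_mul, ← pow_succ]; exact hu (j + 1))
  simp only [strahlerGF, ← Finset.mul_sum, htelescope,
    Finset.sum_range_sub' (fun j => 1 / (1 - u ^ 2 ^ j)), pow_zero, pow_one]

theorem strahlerGF_succ (hu0 : u ≠ 0) {a z : K} (hD : 1 + (a + 2) * u + u ^ 2 ≠ 0)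
    (hz : z = u / (1 + (a + 2) * u + u ^ 2)) (q : ℕ) :
    strahlerGF u (q + 1) = z * strahlerGF u q ^ 2 +
      2 * z * strahlerGF u (q + 1) * ∑ j ∈ Finset.range (q + 1), strahlerGF u j +
      a * z * strahlerGF u (q + 1) := by
  have hu1 : 1 - u ≠ 0 := sub_ne_zero.mpr (by simpa using (hu 0).symm)
  have hy2 := sub_ne_zero.mpr (hu (q + 1)).symm
  have hy4 := sub_ne_zero.mpr (hu (q + 2)).symm
  rw [sum_range_strahlerGF hu, hz]
  simp only [strahlerGF]
  rw [pow_succ 2 (q + 1), pow_mul] at hy4 ⊢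
  rw [pow_succ 2 q, pow_mul] at hy2 hy4 ⊢
  generalize u ^ 2 ^ q = y at hy2 hy4 ⊢
  rw [← pow_mul] at hy4
  -- kept opaque, since `field_simp` would rewrite the denominator out of the shape of `hD`
  set D := 1 + (a + 2) * u + u ^ 2
  field_simp
  ring

end StrahlerGF

theorem RatFunc.X_pow_ne_one {K : Type*} [Field K] {n : ℕ} (hn : n ≠ 0) :
    (RatFunc.X : RatFunc K) ^ n ≠ 1 :=
  fun h => (RatFunc.transcendental_X.pow (Nat.pos_of_ne_zero hn)) (h ▸ isAlgebraic_one)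

theorem RatFunc.one_add_C_mul_X_add_X_sq_ne_zero {K : Type*} [Field K] (b : K) :
    (1 + RatFunc.C b * RatFunc.X + RatFunc.X ^ 2 : RatFunc K) ≠ 0 := by
  have hp : (1 + Polynomial.C b * Polynomial.X + Polynomial.X ^ 2 : Polynomial K) ≠ 0 :=
    fun h => by
      simpa [Polynomial.coeff_one, Polynomial.coeff_X, Polynomial.coeff_C] using
        congrArg (Polynomial.coeff · 2) h
  simpa using RatFunc.algebraMap_ne_zero hp

/-- with the substitution `z = u/(1 + (a+2)u + u²)` in `ℚ(u)`, the
rational functions `R_p = ((1-u²)/u) · u^{2^p}/(1 - u^{2^{p+1}})` satisfy `R_0 = 1`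
and the Horton–Strahler recursion
`R_p = z R_{p-1}² + 2z R_p (Σ_{0 ≤ j < p} R_j) + a z R_p` for `p ≥ 1`. -/
theorem weighted_unary_binary_register_recursion (a : ℚ)
    (z : RatFunc ℚ)
    (hz : z = RatFunc.X / (1 + RatFunc.C (a + 2) * RatFunc.X + RatFunc.X ^ 2))
    (R : ℕ → RatFunc ℚ)
    (hR : ∀ p, R p = ((1 - RatFunc.X ^ 2) / RatFunc.X) *
        ((RatFunc.X : RatFunc ℚ) ^ (2 ^ p) / (1 - RatFunc.X ^ (2 ^ (p + 1))))) :
    R 0 = 1 ∧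
    ∀ p, 1 ≤ p →
      R p = z * R (p - 1) ^ 2 + 2 * z * R p * (∑ j ∈ Finset.range p, R j)
              + RatFunc.C a * z * R p := by
  have hX : ∀ k, (RatFunc.X : RatFunc ℚ) ^ 2 ^ k ≠ 1 :=
    fun k => RatFunc.X_pow_ne_one (pow_ne_zero k two_ne_zero)
  have hD := RatFunc.one_add_C_mul_X_add_X_sq_ne_zero (a + 2)
  rw [map_add, map_ofNat] at hz hD
  obtain rfl : R = strahlerGF RatFunc.X := funext hR
  refine ⟨strahlerGF_zero hX RatFunc.X_ne_zero, fun p hp => ?_⟩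
  obtain ⟨q, rfl⟩ := Nat.exists_eq_add_of_le' hp
  rw [Nat.add_sub_cancel]
  exact strahlerGF_succ hX RatFunc.X_ne_zero hD hz q
end
end

section
/- In the field of rational functions ℚ(v), set z = v/(1 + 3v + v²) and for each integer h ≥ 1 define p_h = z(1+v) · ((1+2v)^{h−1} − v^h (v+2)^{h−1}) / ((1+2v)^{h−1} − v^{h+1} (v+2)^{h−1}). Then p_1 = z and for every h ≥ 1 one has p_{h+1} = −z + (2z − z²)/(1 − p_h). -/
/-! Write `p_{n+1} = z (1 + v) N_n / D_n` with `N_n = (1+2v)^n - v^(n+1) (v+2)^n`,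
`D_n = (1+2v)^n - v^(n+2) (v+2)^n` and `W = 1 + 3v + v²`, so that `z = v / W`. Both sequences
obey first-order linear relations: `D_{n+1} = W D_n - v(1+v) N_n`, which gives
`1 - p_{n+1} = D_{n+1} / (W D_n)`, and `(1+v) N_{n+1} + D_{n+1} = (1+2v)(v+2) D_n = (2W - v) D_n`,
which is the recursion after clearing denominators. In `ℚ(v)` neither `W` nor any `D_n`
vanishes, since each takes the value `1` at `v = 0`. -/

open Polynomial

namespace MarkedTrees

section CommRing

variable {R : Type*} [CommRing R]

def num (v : R) (n : ℕ) : R := (1 + 2 * v) ^ n - v ^ (n + 1) * (v + 2) ^ n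

def den (v : R) (n : ℕ) : R := (1 + 2 * v) ^ n - v ^ (n + 2) * (v + 2) ^ n

theorem map_den {S : Type*} [CommRing S] (f : R →+* S) (v : R) (n : ℕ) :
    f (den v n) = den (f v) n := by
  simp [den, map_ofNat]

theorem den_zero_left (n : ℕ) : den (0 : R) n = 1 := by
  simp [den]

theorem den_succ (v : R) (n : ℕ) :
    den v (n + 1) = (1 + 3 * v + v ^ 2) * den v n - v * (1 + v) * num v n := by
  simp only [den, num, pow_succ]; ring

theorem num_succ (v : R) (n : ℕ) :
    (1 + v) * num v (n + 1) + den v (n + 1) = (1 + 2 * v) * (v + 2) * den v n := by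
  simp only [den, num, pow_succ]; ring

end CommRing

section Field

variable {K : Type*} [Field K]

theorem recursion_of_eq_num_div_den {v z : K} {p : ℕ → K} (hW : 1 + 3 * v + v ^ 2 ≠ 0)
    (hden : ∀ n, den v n ≠ 0) (hz : z = v / (1 + 3 * v + v ^ 2))
    (hp : ∀ n, p (n + 1) = z * (1 + v) * num v n / den v n) :
    p 1 = z ∧ ∀ n, p (n + 2) = -z + (2 * z - z ^ 2) / (1 - p (n + 1)) := by
  subst hz
  refine ⟨?_, fun n => ?_⟩
  · have h0 := hden 0
    simp only [hp, num, den, zero_add, pow_zero, pow_one, mul_one] at h0 ⊢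
    field_simp
    ring
  · have hden₀ := hden n
    have hden₁ := hden (n + 1)
    have hden_succ := den_succ v n
    have hnum_succ := num_succ v n
    set W := 1 + 3 * v + v ^ 2 with hW_def
    have one_sub_p : 1 - p (n + 1) = den v (n + 1) / (W * den v n) := by
      rw [hp]
      field_simp
      linear_combination -hden_succ
    rw [one_sub_p, hp]
    field_simp
    linear_combination v * hnum_succ + 2 * v * den v n * hW_def

theorem algebraMap_ne_zero_of_eval_zero_ne_zero {q : K[X]} (hq : q.eval 0 ≠ 0) :
    algebraMap K[X] (RatFunc K) q ≠ 0 :=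
  (map_ne_zero_iff _ (IsFractionRing.injective K[X] (RatFunc K))).mpr
    (by rintro rfl; simp at hq)

theorem den_X_ne_zero (n : ℕ) : den (RatFunc.X : RatFunc K) n ≠ 0 := by
  rw [← RatFunc.algebraMap_X, ← map_den]
  apply algebraMap_ne_zero_of_eval_zero_ne_zero
  rw [← coe_evalRingHom, map_den]
  simp [den_zero_left]

theorem one_add_three_mul_X_add_X_sq_ne_zero :
    (1 + 3 * RatFunc.X + RatFunc.X ^ 2 : RatFunc K) ≠ 0 := by
  have := algebraMap_ne_zero_of_eval_zero_ne_zero (q := (1 + 3 * X + X ^ 2 : K[X])) (by simp)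
  simpa [RatFunc.algebraMap_X, map_ofNat] using this

end Field

end MarkedTrees

/-- with the substitution `z = v/(1 + 3v + v²)` in `ℚ(v)`, the rational
functions `p_h = z(1+v)((1+2v)^{h-1} - v^h (v+2)^{h-1})/((1+2v)^{h-1} - v^{h+1}(v+2)^{h-1})`
satisfy `p_1 = z` and `p_{h+1} = -z + (2z - z²)/(1 - p_h)` for all `h ≥ 1`. -/
theorem marked_ordered_trees_height_recursion
    (z : RatFunc ℚ)
    (hz : z = RatFunc.X / (1 + 3 * RatFunc.X + RatFunc.X ^ 2))
    (p : ℕ → RatFunc ℚ)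
    (hp : ∀ h, 1 ≤ h → p h = z * (1 + RatFunc.X) *
        ((1 + 2 * RatFunc.X) ^ (h - 1) - RatFunc.X ^ h * (RatFunc.X + 2) ^ (h - 1)) /
        ((1 + 2 * RatFunc.X) ^ (h - 1) - RatFunc.X ^ (h + 1) * (RatFunc.X + 2) ^ (h - 1))) :
    p 1 = z ∧ ∀ h, 1 ≤ h → p (h + 1) = -z + (2 * z - z ^ 2) / (1 - p h) := by
  have hp' : ∀ n, p (n + 1) = z * (1 + RatFunc.X) * MarkedTrees.num RatFunc.X n /
      MarkedTrees.den RatFunc.X n :=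
    fun n => hp (n + 1) n.succ_pos
  obtain ⟨hp_one, hp_succ⟩ :=
    MarkedTrees.recursion_of_eq_num_div_den MarkedTrees.one_add_three_mul_X_add_X_sq_ne_zero
      MarkedTrees.den_X_ne_zero hz hp'
  refine ⟨hp_one, fun h hh => ?_⟩
  obtain ⟨n, rfl⟩ := Nat.exists_eq_add_of_le' hh
  exact hp_succ n
end

section
/- Let F and M be formal power series over ℚ satisfying (1 − z)F = (1 − z) + z F² and M = 1 + 3zM + z²M² (each equation forces constant coefficient 1 and has a unique power-series solution). Then F = 1 + zM. -/
/-!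
Since `F` has constant coefficient `1`, write `F = 1 + zN`; substituting and cancelling `z` shows
that `N` satisfies the Motzkin equation `N = 1 + 3zN + z²N²`. Two solutions of that equation
differ by some `D` with `(1 - z(3 + z(N + M))) D = 0`, and the first factor is a unit.
-/

namespace PowerSeries

variable {R : Type*} [CommRing R]

theorem isUnit_one_sub_X_mul (a : R⟦X⟧) : IsUnit (1 - X * a) := by
  rw [isUnit_iff_constantCoeff]
  simp

theorem eq_zero_of_eq_X_mul_mul {a d : R⟦X⟧} (h : d = X * a * d) : d = 0 :=
  (isUnit_one_sub_X_mul a).mul_right_eq_zero.mp (by linear_combination h)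

theorem eq_of_eq_add_X_mul_add_X_sq_mul_sq {b c M N : R⟦X⟧}
    (hM : M = b + c * X * M + X ^ 2 * M ^ 2) (hN : N = b + c * X * N + X ^ 2 * N ^ 2) :
    M = N :=
  sub_eq_zero.mp <| eq_zero_of_eq_X_mul_mul (a := c + X * (M + N)) (by linear_combination hM - hN)

theorem exists_motzkin_of_multiedge {F : R⟦X⟧} (hF : (1 - X) * F = (1 - X) + X * F ^ 2) :
    ∃ N, F = 1 + X * N ∧ N = 1 + 3 * X * N + X ^ 2 * N ^ 2 := by
  have hF0 : constantCoeff F = 1 := by simpa using congrArg constantCoeff hF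
  obtain ⟨N, hN⟩ : (X : R⟦X⟧) ∣ F - 1 := by simp [X_dvd_iff, hF0]
  obtain rfl : F = 1 + X * N := by linear_combination hN
  refine ⟨N, rfl, X_mul_cancel ?_⟩
  linear_combination hF

end PowerSeries

open PowerSeries

/-- if `F` is the multi-edge tree series, `(1-z)F = (1-z) + zF²`, and `M`
is the 3-coloured Motzkin series, `M = 1 + 3zM + z²M²` (each equation has a unique
power-series solution, with constant coefficient 1), then `F = 1 + zM`. -/
theorem multiedge_trees_eq_three_motzkin (F M : PowerSeries ℚ)
    (hF : (1 - PowerSeries.X) * F = (1 - PowerSeries.X) + PowerSeries.X * F ^ 2)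
    (hM : M = 1 + 3 * PowerSeries.X * M + PowerSeries.X ^ 2 * M ^ 2) :
    F = 1 + PowerSeries.X * M := by
  obtain ⟨N, rfl, hN⟩ := exists_motzkin_of_multiedge hF
  rw [eq_of_eq_add_X_mul_add_X_sq_mul_sq hN hM]
end

section
/- Let G ∈ ℚ⟦x, u⟧ be a bivariate formal power series satisfying G = 1 + x G² (1 − u + uG) (this equation has a unique power-series solution, with constant coefficient 1). Then for every n ≥ 1 and every k ≥ 0, the coefficient of x^n u^k in G equals (1/n) · C(n, k) · C(2n, n − 1 − k). -/
/-!
After swapping the two variables, `x` becomes the outer one and `H = G - 1` satisfies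
`H = x φ(H)` with `φ(w) = (1 + w)² (1 + u w) ∈ ℚ⟦u⟧[w]`. Lagrange inversion gives
`n [xⁿ] H = [wⁿ⁻¹] φ(w)ⁿ = ∑_{a + b = n - 1} C(2n, a) C(n, b) uᵇ`, and reading off the
coefficient of `uᵏ` gives the formula.
-/

open scoped Polynomial

namespace PowerSeries

section Swap

variable {R : Type*} [CommSemiring R]

noncomputable def swap : R⟦X⟧⟦X⟧ →+* R⟦X⟧⟦X⟧ where
  toFun F := mk fun n ↦ mk fun k ↦ coeff n (coeff k F)
  map_one' := by
    ext n k
    by_cases hn : n = 0 <;> by_cases hk : k = 0 <;> simp [coeff_one, hn, hk]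
  map_mul' F F' := by
    ext n k
    simp only [coeff_mk, coeff_mul, map_sum]
    exact Finset.sum_comm
  map_zero' := by ext; simp
  map_add' F F' := by ext; simp

@[simp]
lemma coeff_coeff_swap (F : R⟦X⟧⟦X⟧) (n k : ℕ) :
    coeff k (coeff n (swap F)) = coeff n (coeff k F) := by
  simp [swap]

lemma swap_C_X : swap (C (X : R⟦X⟧)) = X := by
  ext n k
  rw [coeff_coeff_swap]
  by_cases hn : n = 1 <;> by_cases hk : k = 0 <;> simp [coeff_X, coeff_C, coeff_one, hn, hk]

lemma swap_X : swap (X : R⟦X⟧⟦X⟧) = C X := by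
  ext n k
  rw [coeff_coeff_swap]
  by_cases hn : n = 0 <;> by_cases hk : k = 1 <;> simp [coeff_X, coeff_C, coeff_one, hn, hk]

end Swap

section Lagrange

variable {R : Type*} [CommRing R] {φ : R[X]} {H : R⟦X⟧}

lemma pow_eq_X_pow_mul_eval₂ (hH : H = X * φ.eval₂ C H) (j : ℕ) :
    H ^ j = X ^ j * (φ ^ j).eval₂ C H := by
  conv_lhs => rw [hH]
  rw [mul_pow, Polynomial.eval₂_pow]

lemma coeff_pow_of_eq_X_mul_eval₂ (hH : H = X * φ.eval₂ C H) (d j : ℕ) :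
    coeff d (H ^ j) = if j ≤ d then coeff (d - j) ((φ ^ j).eval₂ C H) else 0 := by
  rw [pow_eq_X_pow_mul_eval₂ hH, coeff_X_pow_mul']

lemma natCast_mul_coeff_eval₂_of_eq_X_mul_eval₂ (hH : H = X * φ.eval₂ C H) {N : ℕ}
    (hN : 1 ≤ N) (ih : ∀ j ≤ N, (N : R) * coeff N (H ^ j) = j * (φ ^ N).coeff (N - j))
    (ψ : R[X]) :
    (N : R) * coeff N (ψ.eval₂ C H) = (Polynomial.derivative ψ * φ ^ N).coeff (N - 1) := by
  induction ψ using Polynomial.induction_on' with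
  | add p q hp hq =>
    simp only [Polynomial.eval₂_add, map_add, mul_add, hp, hq, add_mul, Polynomial.coeff_add]
  | monomial j a =>
    rw [Polynomial.eval₂_monomial, coeff_C_mul, Polynomial.derivative_monomial,
      ← Polynomial.C_mul_X_pow_eq_monomial, mul_assoc, Polynomial.coeff_C_mul,
      Polynomial.coeff_X_pow_mul']
    by_cases hj : j ≤ N
    · rcases Nat.eq_zero_or_pos j with rfl | hj0
      · simp only [Nat.cast_zero, mul_zero, zero_mul]
        rw [mul_left_comm, ih 0 hj, Nat.cast_zero, zero_mul, mul_zero]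
      · rw [if_pos (by omega), show N - 1 - (j - 1) = N - j by omega, mul_left_comm, ih j hj]
        ring
    · rw [coeff_pow_of_eq_X_mul_eval₂ hH, if_neg hj, if_neg (by omega)]
      simp

/-- Multiplying by `N = n - m`, the induction hypothesis turns `N [xⁿ] Hᵐ = N [x^N] φᵐ(H)`
into `[w^(N-1)] (φᵐ)' φ^N`, and `n (φᵐ)' φ^N = m (φⁿ)'`. -/
theorem lagrange_inversion [IsAddTorsionFree R] (hH : H = X * φ.eval₂ C H) {m n : ℕ}
    (hmn : m ≤ n) : (n : R) * coeff n (H ^ m) = m * (φ ^ n).coeff (n - m) := by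
  induction n using Nat.strong_induction_on generalizing m with
  | _ n ih =>
  rcases hmn.eq_or_lt with rfl | hlt
  · have hH0 : constantCoeff H = 0 := by rw [hH]; simp
    rw [coeff_pow_of_eq_X_mul_eval₂ hH, if_pos le_rfl, Nat.sub_self, coeff_zero_eq_constantCoeff,
      Polynomial.hom_eval₂, constantCoeff_comp_C, hH0, Polynomial.coeff_zero_eq_eval_zero]
    rfl
  rcases Nat.eq_zero_or_pos m with rfl | hm
  · simp [coeff_one, hlt.ne']
  set N := n - m
  have hN1 : 1 ≤ N := by omega
  have hderiv : (n : R) * (Polynomial.derivative (φ ^ m) * φ ^ N).coeff (N - 1) =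
      m * (N * (φ ^ n).coeff N) := by
    have hpoly : Polynomial.C (n : R) * (Polynomial.derivative (φ ^ m) * φ ^ N) =
        Polynomial.C (m : R) * Polynomial.derivative (φ ^ n) := by
      rw [Polynomial.derivative_pow, Polynomial.derivative_pow, ← show m - 1 + N = n - 1 by omega,
        pow_add]
      ring
    have := congrArg (Polynomial.coeff · (N - 1)) hpoly
    simp only [Polynomial.coeff_C_mul, Polynomial.coeff_derivative] at this
    rw [this, Nat.sub_add_cancel hN1, Nat.cast_pred hN1, sub_add_cancel,
      mul_comm ((φ ^ n).coeff N)]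
  apply nsmul_right_injective (M := R) (show N ≠ 0 by omega)
  simp only [nsmul_eq_mul]
  calc (N : R) * (n * coeff n (H ^ m))
      = n * (N * coeff N ((φ ^ m).eval₂ C H)) := by
        rw [coeff_pow_of_eq_X_mul_eval₂ hH, if_pos hlt.le]; ring
    _ = n * (Polynomial.derivative (φ ^ m) * φ ^ N).coeff (N - 1) := by
        rw [natCast_mul_coeff_eval₂_of_eq_X_mul_eval₂ hH hN1
          (fun j hj ↦ ih N (by omega) hj)]
    _ = N * (m * (φ ^ n).coeff N) := by rw [hderiv]; ring

end Lagrange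

end PowerSeries

lemma Polynomial.coeff_C_mul_X_add_one_pow {R : Type*} [CommSemiring R] (r : R) (n b : ℕ) :
    ((C r * X + 1) ^ n).coeff b = n.choose b * r ^ b := by
  rw [show (C r * X + 1) ^ n = ((X + 1) ^ n).comp (C r * X) by simp,
    comp_C_mul_X_coeff, coeff_X_add_one_pow]

open PowerSeries

noncomputable def ternaryKernel : ℚ⟦X⟧[X] :=
  (Polynomial.X + 1) ^ 2 * (Polynomial.C X * Polynomial.X + 1)

lemma coeff_coeff_ternaryKernel_pow {n : ℕ} (hn : 1 ≤ n) (k : ℕ) :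
    coeff k ((ternaryKernel ^ n).coeff (n - 1)) =
      if k + 1 ≤ n then ((2 * n).choose (n - 1 - k) * n.choose k : ℚ) else 0 := by
  have hterm (a b j : ℕ) : coeff k ((a : ℚ⟦X⟧) * ((b : ℚ⟦X⟧) * X ^ j)) =
      if k = j then (a * b : ℚ) else 0 := by
    rw [← mul_assoc, ← Nat.cast_mul, ← map_natCast C, coeff_C_mul_X_pow, Nat.cast_mul]
  rw [ternaryKernel, mul_pow, ← pow_mul, Polynomial.coeff_mul,
    ← Finset.Nat.sum_antidiagonal_swap, Finset.Nat.sum_antidiagonal_eq_sum_range_succ_mk, map_sum]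
  simp only [Prod.swap_prod_mk, Polynomial.coeff_X_add_one_pow,
    Polynomial.coeff_C_mul_X_add_one_pow, hterm, Finset.sum_ite_eq, Finset.mem_range,
    Nat.succ_eq_add_one, Nat.sub_add_cancel hn, Nat.lt_iff_add_one_le]

/-- `ℚ⟦x, u⟧` is encoded as `ℚ⟦x⟧⟦u⟧`: `C X` stands for `x` and `X` for `u`. -/
theorem ternary_trees_middle_edges
    (G : PowerSeries (PowerSeries ℚ))
    (hG : G = 1 + PowerSeries.C (PowerSeries.X : PowerSeries ℚ) * G ^ 2 *
        (1 - PowerSeries.X + PowerSeries.X * G))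
    (n k : ℕ) (hn : 1 ≤ n) :
    PowerSeries.coeff n (PowerSeries.coeff k G) =
      (1 / n : ℚ) * (Nat.choose n k : ℚ) *
        (if k + 1 ≤ n then (Nat.choose (2 * n) (n - 1 - k) : ℚ) else 0) := by
  have := IsAddTorsionFree.of_module_rat ℚ⟦X⟧
  set H := swap G - 1 with hH_def
  have hH : H = X * ternaryKernel.eval₂ C H := by
    have h := congrArg swap hG
    simp only [map_add, map_one, map_mul, map_pow, map_sub, swap_C_X, swap_X] at h
    simp only [ternaryKernel, Polynomial.eval₂_mul, Polynomial.eval₂_pow, Polynomial.eval₂_add,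
      Polynomial.eval₂_X, Polynomial.eval₂_C, Polynomial.eval₂_one, hH_def]
    linear_combination h
  have hlagrange := lagrange_inversion hH hn
  rw [pow_one, Nat.cast_one, one_mul, hH_def, map_sub, coeff_one, if_neg (by omega), sub_zero]
    at hlagrange
  have hcoeff := congrArg (coeff k) hlagrange
  rw [← map_natCast C, coeff_C_mul, coeff_coeff_swap, coeff_coeff_ternaryKernel_pow hn] at hcoeff
  have hn0 : (n : ℚ) ≠ 0 := by positivity
  split_ifs at hcoeff ⊢
  · field_simp
    linear_combination hcoeff
  · simpa [hn0] using hcoeff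
end

section
/- Let F, G, M be formal power series over ℚ such that F and G have zero constant coefficient, F(1 − G) = zG, G(1 − F) = z, and M = 1 + zM + z²M² (M is the Motzkin generating function, with constant coefficient 1). Then F = z²M and M · (1 − z − F) = 1. -/
/-!
Eliminating `G` from the two tree equations leaves the quadratic `F = F² + zF + z²`, which the
Motzkin equation multiplied by `z²` shows is also satisfied by `z²M`. Two solutions `a`, `b` of
this quadratic satisfy `(a - b)(1 - z - a - b) = 0`, and for power series without constant term
the second factor is invertible.
-/

theorem eq_sq_add_mul_add_sq_of_mul_one_sub {R : Type*} [CommRing R] {F G z : R}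
    (hFG : F * (1 - G) = z * G) (hGF : G * (1 - F) = z) :
    F = F ^ 2 + z * F + z ^ 2 := by
  have hF : F = G * (F + z) := by linear_combination hFG
  linear_combination (1 - F) * hF + (F + z) * hGF

theorem PowerSeries.eq_of_eq_sq_add_mul_add {R : Type*} [CommRing R] {a b c d : PowerSeries R}
    (hc : constantCoeff c = 0) (ha0 : constantCoeff a = 0) (hb0 : constantCoeff b = 0)
    (ha : a = a ^ 2 + c * a + d) (hb : b = b ^ 2 + c * b + d) :
    a = b := by
  have hunit : IsUnit (1 - c - a - b) :=
    isUnit_iff_constantCoeff.mpr (by simp [hc, ha0, hb0])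
  have hprod : (1 - c - a - b) * (a - b) = 0 := by linear_combination ha - hb
  exact sub_eq_zero.mp ((hunit.mul_right_eq_zero).mp hprod)

theorem retakh_paths_are_motzkin_general (F G M : PowerSeries ℚ)
    (hF0 : PowerSeries.constantCoeff F = 0)
    (hFG : F * (1 - G) = PowerSeries.X * G)
    (hGF : G * (1 - F) = PowerSeries.X)
    (hM : M = 1 + PowerSeries.X * M + PowerSeries.X ^ 2 * M ^ 2) :
    F = PowerSeries.X ^ 2 * M ∧ M * (1 - PowerSeries.X - F) = 1 := by
  have hF : F = PowerSeries.X ^ 2 * M :=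
    PowerSeries.eq_of_eq_sq_add_mul_add PowerSeries.constantCoeff_X hF0 (by simp)
      (eq_sq_add_mul_add_sq_of_mul_one_sub hFG hGF)
      (by linear_combination PowerSeries.X ^ 2 * hM)
  exact ⟨hF, by linear_combination hM - M * hF⟩

/-- if `F`, `G` have zero constant coefficient and satisfy
`F(1-G) = zG`, `G(1-F) = z`, and `M` is the Motzkin series `M = 1 + zM + z²M²`,
then `F = z²M` and `M(1 - z - F) = 1`. -/
theorem retakh_paths_are_motzkin (F G M : PowerSeries ℚ)
    (hF0 : PowerSeries.constantCoeff F = 0)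
    (hG0 : PowerSeries.constantCoeff G = 0)
    (hFG : F * (1 - G) = PowerSeries.X * G)
    (hGF : G * (1 - F) = PowerSeries.X)
    (hM : M = 1 + PowerSeries.X * M + PowerSeries.X ^ 2 * M ^ 2) :
    F = PowerSeries.X ^ 2 * M ∧ M * (1 - PowerSeries.X - F) = 1 :=
  retakh_paths_are_motzkin_general F G M hF0 hFG hGF hM
end

section
/- In the field of rational functions ℚ(v), set z = v/(1 + v + v²) and for each integer k ≥ 1 define G_k = (v/(1+v)) · (1 − v^{2k}) / (1 − v^{2k+1}). Then G_1 = z and for every k ≥ 1 one has G_{k+1} = z(1 − G_k)/(1 − (1 + z)G_k). -/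
noncomputable section

open Polynomial in
lemma aux_ne_zero (p : Polynomial ℚ) (hp : p.eval 0 ≠ 0) :
    (algebraMap (Polynomial ℚ) (RatFunc ℚ)) p ≠ 0 := by
  apply RatFunc.algebraMap_ne_zero
  intro h; apply hp; simp [h]

lemma one_sub_X_pow_ne (n : ℕ) (hn : 1 ≤ n) :
    (1 - RatFunc.X ^ n : RatFunc ℚ) ≠ 0 := by
  have : (1 - RatFunc.X ^ n : RatFunc ℚ)
      = algebraMap (Polynomial ℚ) (RatFunc ℚ) (1 - Polynomial.X ^ n) := by
    simp [RatFunc.algebraMap_X, map_sub, map_pow]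
  rw [this]
  apply aux_ne_zero
  simp [Polynomial.eval_pow, zero_pow (by omega : n ≠ 0)]

lemma one_add_X_ne : (1 + RatFunc.X : RatFunc ℚ) ≠ 0 := by
  have : (1 + RatFunc.X : RatFunc ℚ)
      = algebraMap (Polynomial ℚ) (RatFunc ℚ) (1 + Polynomial.X) := by
    simp [RatFunc.algebraMap_X]
  rw [this]; apply aux_ne_zero; simp

lemma one_add_X_sq_ne : (1 + RatFunc.X + RatFunc.X ^ 2 : RatFunc ℚ) ≠ 0 := by
  have : (1 + RatFunc.X + RatFunc.X ^ 2 : RatFunc ℚ)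
      = algebraMap (Polynomial ℚ) (RatFunc ℚ) (1 + Polynomial.X + Polynomial.X ^ 2) := by
    simp [RatFunc.algebraMap_X]
  rw [this]; apply aux_ne_zero; simp

/-- with the substitution `z = v/(1 + v + v²)` in `ℚ(v)`, the rational
functions `G_k = (v/(1+v)) (1 - v^{2k})/(1 - v^{2k+1})` satisfy `G_1 = z` and the
recursion `G_{k+1} = z(1 - G_k)/(1 - (1+z)G_k)` for all `k ≥ 1`. -/
theorem retakh_bounded_height_recursion
    (z : RatFunc ℚ)
    (hz : z = RatFunc.X / (1 + RatFunc.X + RatFunc.X ^ 2))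
    (G : ℕ → RatFunc ℚ)
    (hG : ∀ k, 1 ≤ k → G k = (RatFunc.X / (1 + RatFunc.X)) *
        (1 - RatFunc.X ^ (2 * k)) / (1 - RatFunc.X ^ (2 * k + 1))) :
    G 1 = z ∧ ∀ k, 1 ≤ k → G (k + 1) = z * (1 - G k) / (1 - (1 + z) * G k) := by
  have h2 := one_add_X_ne
  have h3 := one_add_X_sq_ne
  constructor
  · rw [hG 1 le_rfl, hz]
    have hd := one_sub_X_pow_ne 3 (by norm_num)
    field_simp
    ring
  · intro k hk
    have hd1 := one_sub_X_pow_ne (2 * k + 1) (by omega)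
    have hd2 := one_sub_X_pow_ne (2 * (k + 1) + 1) (by omega)
    have hkey : 1 - (1 + z) * G k
        = (1 - RatFunc.X ^ (2 * k + 3)) /
          ((1 + RatFunc.X + RatFunc.X ^ 2) * (1 - RatFunc.X ^ (2 * k + 1))) := by
      rw [hz, hG k hk]
      field_simp
      ring
    have hd3 := one_sub_X_pow_ne (2 * k + 3) (by omega)
    rw [hkey, hG (k + 1) (by omega), hG k hk, hz]
    field_simp
    ring
end
end

section
/- In the field of rational functions ℚ(v), set z = v/(1 + v + v²). For m ≥ 1 let B_m be the m × m matrix with entries (B_m)_{ii} = 1, (B_m)_{i,i−1} = −z, (B_m)_{ij} = −z for all j > i, and (B_m)_{ij} = 0 for j < i − 1, and let D_m = det B_m (with D_0 = 1). Then for every m ≥ 0, D_m = (1 + v)^{m−1} (1 − v^{m+2}) / ((1 − v)(1 + v + v²)^m), and consequently the recursion (1 + v + v²)² D_{m+2} − (1 + v + v²)(1 + v)² D_{m+1} + v(1 + v)² D_m = 0 holds with D_0 = D_1 = 1. -/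
/-!
Expanding along the first column, `det B_{m+2} = det B_{m+1} + z · det E_{m+1}`, where `E_k` is
`B_k` with its corner entry replaced by `-z` (so its first row is constant), and in the same way
`det E_{m+2} = -z · det B_{m+1} + z · det E_{m+1}`. Eliminating `E` gives the three-term recursion
`D_{m+2} = (1 + z) D_{m+1} - z (1 + z) D_m`; as `1 + z = (1 + v)² / (1 + v + v²)` this is the stated
recursion, and the closed form satisfies it with the same initial values `D_0 = D_1 = 1`.
-/

open Matrix Polynomial

lemma RatFunc.algebraMap_ne_zero_of_eval_zero {K : Type*} [Field K] {p : K[X]}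
    (hp : p.eval 0 ≠ 0) : algebraMap K[X] (RatFunc K) p ≠ 0 :=
  RatFunc.algebraMap_ne_zero (by rintro rfl; simp at hp)

namespace DeutschStrip

section Determinant

variable {R : Type*} [CommRing R] (z : R)

def stripEntry (i j : ℕ) : R :=
  if i = j then 1 else if i = j + 1 then -z else if i < j then -z else 0

def stripMatrix (m : ℕ) : Matrix (Fin m) (Fin m) R :=
  of fun i j => stripEntry z i j

def stripMatrixWithCorner (a : R) (m : ℕ) : Matrix (Fin m) (Fin m) R :=
  of fun i j => if (i : ℕ) = 0 ∧ (j : ℕ) = 0 then a else stripEntry z i j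

lemma stripEntry_succ_succ (i j : ℕ) : stripEntry z (i + 1) (j + 1) = stripEntry z i j := by
  simp only [stripEntry]; split_ifs <;> first | rfl | omega

lemma stripMatrixWithCorner_one (m : ℕ) : stripMatrixWithCorner z 1 m = stripMatrix z m := by
  ext i j
  simp only [stripMatrixWithCorner, stripMatrix, stripEntry, of_apply]
  split_ifs <;> first | rfl | omega

lemma stripMatrixWithCorner_submatrix_succ (a : R) (m : ℕ) :
    (stripMatrixWithCorner z a (m + 1)).submatrix Fin.succ Fin.succ = stripMatrix z m := by
  ext i j
  simp [stripMatrixWithCorner, stripMatrix, stripEntry_succ_succ]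

lemma stripMatrixWithCorner_submatrix_succAbove_one (a : R) (m : ℕ) :
    (stripMatrixWithCorner z a (m + 2)).submatrix (Fin.succAbove 1) Fin.succ =
      stripMatrixWithCorner z (-z) (m + 1) := by
  ext i j
  induction i using Fin.cases with
  | zero => induction j using Fin.cases <;> simp [stripMatrixWithCorner, stripEntry]
  | succ i => simp [stripMatrixWithCorner, stripEntry_succ_succ]

lemma det_stripMatrixWithCorner_add_two (a : R) (m : ℕ) :
    (stripMatrixWithCorner z a (m + 2)).det =
      a * (stripMatrix z (m + 1)).det + z * (stripMatrixWithCorner z (-z) (m + 1)).det := by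
  rw [det_succ_column_zero, Fin.sum_univ_succ, Fin.sum_univ_succ, Fin.succAbove_zero,
    stripMatrixWithCorner_submatrix_succ, Fin.succ_zero_eq_one,
    stripMatrixWithCorner_submatrix_succAbove_one]
  simp [stripMatrixWithCorner, stripEntry]

lemma det_stripMatrix_zero : (stripMatrix z 0).det = 1 := det_fin_zero

lemma det_stripMatrix_one : (stripMatrix z 1).det = 1 := by
  simp [stripMatrix, stripEntry]

lemma det_stripMatrixWithCorner_one (a : R) : (stripMatrixWithCorner z a 1).det = a := by
  simp [stripMatrixWithCorner]

lemma det_stripMatrix_add_two (n : ℕ) :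
    (stripMatrix z (n + 2)).det =
      (1 + z) * (stripMatrix z (n + 1)).det - (z + z ^ 2) * (stripMatrix z n).det := by
  have hS (m : ℕ) := det_stripMatrixWithCorner_add_two z 1 m
  have hT (m : ℕ) := det_stripMatrixWithCorner_add_two z (-z) m
  simp only [stripMatrixWithCorner_one, one_mul] at hS
  cases n with
  | zero =>
    rw [hS, det_stripMatrix_one, det_stripMatrix_zero, det_stripMatrixWithCorner_one]
    ring
  | succ n => linear_combination hS (n + 1) + z * hT n - z * hS n

def stripRecurrence : LinearRecurrence R := ⟨2, ![-(z + z ^ 2), 1 + z]⟩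

lemma stripRecurrence_isSolution_iff (u : ℕ → R) :
    (stripRecurrence z).IsSolution u ↔
      ∀ n, u (n + 2) = (1 + z) * u (n + 1) - (z + z ^ 2) * u n := by
  refine forall_congr' fun n => ?_
  change u (n + 2) = ∑ i : Fin 2, ![-(z + z ^ 2), 1 + z] i * u (n + i) ↔ _
  simp only [Fin.sum_univ_two, cons_val_zero, cons_val_one, Fin.val_zero, Fin.val_one, add_zero]
  constructor <;> intro h <;> linear_combination h

end Determinant

section ClosedForm

variable {K : Type*} [Field K] {v : K}

def stripDetClosedForm (v : K) (m : ℕ) : K :=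
  (1 + v) ^ ((m : ℤ) - 1) * (1 - v ^ (m + 2)) / ((1 - v) * (1 + v + v ^ 2) ^ m)

lemma stripDetClosedForm_zero (h₁ : 1 + v ≠ 0) (h₂ : 1 - v ≠ 0) :
    stripDetClosedForm v 0 = 1 := by
  simp only [stripDetClosedForm, Nat.cast_zero, zero_sub, _root_.zpow_neg_one]
  field_simp
  ring

lemma stripDetClosedForm_one (h₂ : 1 - v ≠ 0) (hs : 1 + v + v ^ 2 ≠ 0) :
    stripDetClosedForm v 1 = 1 := by
  simp only [stripDetClosedForm, Nat.cast_one, sub_self, zpow_zero]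
  field_simp
  ring

lemma stripDetClosedForm_add_two (h₁ : 1 + v ≠ 0) (h₂ : 1 - v ≠ 0) (hs : 1 + v + v ^ 2 ≠ 0)
    (n : ℕ) :
    stripDetClosedForm v (n + 2) =
      (1 + v / (1 + v + v ^ 2)) * stripDetClosedForm v (n + 1)
        - (v / (1 + v + v ^ 2) + (v / (1 + v + v ^ 2)) ^ 2) * stripDetClosedForm v n := by
  have hpow (k : ℕ) :
      (1 + v) ^ (((n + k : ℕ) : ℤ) - 1) = (1 + v) ^ ((n : ℤ) - 1) * (1 + v) ^ k := by
    rw [← zpow_natCast, ← zpow_add₀ h₁]; push_cast; ring_nf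
  simp only [stripDetClosedForm, hpow 1, hpow 2]
  field_simp
  ring

end ClosedForm

end DeutschStrip

open DeutschStrip

/-- with the substitution `z = v/(1 + v + v²)` in `ℚ(v)`, let `B_m` be the
`m × m` matrix with diagonal entries `1`, entries `-z` on the subdiagonal and everywhere
strictly above the diagonal, and `0` elsewhere, and `D_m = det B_m` (so `D_0 = 1`).
Then `D_m = (1+v)^{m-1}(1 - v^{m+2})/((1-v)(1+v+v²)^m)` for every `m ≥ 0`, and
consequently `(1+v+v²)² D_{m+2} - (1+v+v²)(1+v)² D_{m+1} + v(1+v)² D_m = 0`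
with `D_0 = D_1 = 1`. -/
theorem deutsch_strip_determinant
    (z : RatFunc ℚ)
    (hz : z = RatFunc.X / (1 + RatFunc.X + RatFunc.X ^ 2))
    (B : (m : ℕ) → Matrix (Fin m) (Fin m) (RatFunc ℚ))
    (hB : ∀ m, B m = Matrix.of fun (i j : Fin m) =>
      if (i : ℕ) = (j : ℕ) then 1
      else if (i : ℕ) = (j : ℕ) + 1 then -z
      else if (i : ℕ) < (j : ℕ) then -z
      else 0)
    (D : ℕ → RatFunc ℚ) (hD : ∀ m, D m = (B m).det) :
    (∀ m : ℕ, D m = (1 + RatFunc.X) ^ ((m : ℤ) - 1) * (1 - RatFunc.X ^ (m + 2)) /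
        ((1 - RatFunc.X) * (1 + RatFunc.X + RatFunc.X ^ 2) ^ m)) ∧
    (∀ m : ℕ, (1 + RatFunc.X + RatFunc.X ^ 2) ^ 2 * D (m + 2)
        - (1 + RatFunc.X + RatFunc.X ^ 2) * (1 + RatFunc.X) ^ 2 * D (m + 1)
        + RatFunc.X * (1 + RatFunc.X) ^ 2 * D m = 0) ∧
    D 0 = 1 ∧ D 1 = 1 := by
  have h₁ : (1 + RatFunc.X : RatFunc ℚ) ≠ 0 := by
    rw [← RatFunc.algebraMap_X, ← map_one (algebraMap ℚ[X] _), ← map_add]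
    exact RatFunc.algebraMap_ne_zero_of_eval_zero (by simp)
  have h₂ : (1 - RatFunc.X : RatFunc ℚ) ≠ 0 := by
    rw [← RatFunc.algebraMap_X, ← map_one (algebraMap ℚ[X] _), ← map_sub]
    exact RatFunc.algebraMap_ne_zero_of_eval_zero (by simp)
  have hs : (1 + RatFunc.X + RatFunc.X ^ 2 : RatFunc ℚ) ≠ 0 := by
    rw [← RatFunc.algebraMap_X, ← map_one (algebraMap ℚ[X] _), ← map_pow, ← map_add, ← map_add]
    exact RatFunc.algebraMap_ne_zero_of_eval_zero (by simp)
  have hdet (m : ℕ) : D m = (stripMatrix z m).det := by rw [hD, hB]; rfl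
  have hD₀ : D 0 = 1 := by rw [hdet, det_stripMatrix_zero]
  have hD₁ : D 1 = 1 := by rw [hdet, det_stripMatrix_one]
  have hsol : (stripRecurrence z).IsSolution D :=
    (stripRecurrence_isSolution_iff z D).2 fun n => by
      simpa only [hdet] using det_stripMatrix_add_two z n
  have hclosed : D = stripDetClosedForm RatFunc.X := by
    refine ((stripRecurrence z).eq_iff_eqOn_range_order _ _ hsol ?_).2 fun n hn => ?_
    · exact (stripRecurrence_isSolution_iff z _).2 (hz ▸ stripDetClosedForm_add_two h₁ h₂ hs)
    · obtain rfl | rfl : n = 0 ∨ n = 1 := by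
        simp [stripRecurrence] at hn; omega
      · rw [hD₀, stripDetClosedForm_zero h₁ h₂]
      · rw [hD₁, stripDetClosedForm_one h₂ hs]
  refine ⟨fun m => by rw [hclosed]; rfl, fun n => ?_, hD₀, hD₁⟩
  rw [(stripRecurrence_isSolution_iff z D).1 hsol n, hz]
  field_simp
  ring
end
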